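/- arXiv:2510.16330 — 4 statements merged into one kernel-verified Lean document; each statement's English description precedes it below -/
import Mathlib

section
/- Let l ∈ ℕ ∪ {∞} and let G be a hypergraph with l-degeneracy κ_l(G) and rank r(G). Then there exists a linear ordering of V(G) such that, in the directed acyclic hypergraph G⃗ obtained by equipping G with this ordering, every vertex has l-outdegree at most κ_l(G) · r(G). -/
open scoped Classical

noncomputable section

/-- A hypergraph: a finite vertex set and a finite set of hyperedges, with vertices in `ℕ`. -/
structure HGraph where
  verts : Finset ℕ
  edges : Finset (Finset ℕ)

namespace HGraph

/-- Well-formedness: every hyperedge is a nonempty subset of the vertex set. -/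
def Good (G : HGraph) : Prop := ∀ e ∈ G.edges, e ⊆ G.verts ∧ e.Nonempty

/-- The rank of a hypergraph: the maximum arity of a hyperedge. -/
def rank (G : HGraph) : ℕ := G.edges.sup Finset.card

/-- The induced `l`-trimmed subhypergraph of `G` on `S`. -/
def trim (G : HGraph) (S : Finset ℕ) (l : ℕ∞) : HGraph :=
  ⟨G.verts ∩ S,
    (G.edges.filter fun e => ((e \ S).card : ℕ∞) ≤ l ∧ (e ∩ S).Nonempty).image fun e => e ∩ S⟩

/-- The degree of a vertex: the number of hyperedges containing it. -/
def degree (G : HGraph) (v : ℕ) : ℕ := (G.edges.filter fun e => v ∈ e).card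

/-- The `l`-degeneracy of a hypergraph: the least `κ` such that every nonempty induced
`l`-trimmed subhypergraph has a vertex of degree at most `κ`. -/
def degeneracy (G : HGraph) (l : ℕ∞) : ℕ :=
  sInf {κ : ℕ | ∀ S ⊆ G.verts, S.Nonempty → ∃ v ∈ S, (G.trim S l).degree v ≤ κ}

/-- Two vertices are adjacent if some hyperedge contains both. -/
def Adj (G : HGraph) (u v : ℕ) : Prop := ∃ e ∈ G.edges, u ∈ e ∧ v ∈ e

/-- A hypergraph is connected if any two vertices are joined by a path of adjacencies. -/
def Connected (G : HGraph) : Prop :=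
  ∀ u ∈ G.verts, ∀ v ∈ G.verts, Relation.ReflTransGen G.Adj u v

/-- `D` is a connected component of `G`. -/
def IsComponent (G : HGraph) (D : Finset ℕ) : Prop :=
  ∃ v ∈ G.verts, D = G.verts.filter fun u => Relation.ReflTransGen G.Adj v u

/-- The induced subhypergraph (only hyperedges entirely inside `S`). -/
def induce (G : HGraph) (S : Finset ℕ) : HGraph :=
  ⟨G.verts ∩ S, G.edges.filter fun e => e ⊆ S⟩

end HGraph

/-- `f` is a homomorphism from `H` to `G`. -/
def IsHom (H G : HGraph) (f : ℕ → ℕ) : Prop :=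
  (∀ v ∈ H.verts, f v ∈ G.verts) ∧ ∀ e ∈ H.edges, e.image f ∈ G.edges

/-- `Hom(G,H)`: the number of homomorphisms from `H` to `G`
(normalized to be `0` off `V(H)` so that the set is finite). -/
def homCount (G H : HGraph) : ℕ :=
  Set.ncard {f : ℕ → ℕ | IsHom H G f ∧ ∀ v ∉ H.verts, f v = 0}

/-- `Homr(G,H)`: the number of arity-preserving homomorphisms from `H` to `G`. -/
def homrCount (G H : HGraph) : ℕ :=
  Set.ncard {f : ℕ → ℕ | IsHom H G f ∧ (∀ e ∈ H.edges, (e.image f).card = e.card) ∧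
    ∀ v ∉ H.verts, f v = 0}

/-- HGraph isomorphism. -/
def Isomorphic (H H' : HGraph) : Prop :=
  ∃ f : ℕ → ℕ, Set.BijOn f ↑H.verts ↑H'.verts ∧
    H'.edges = H.edges.image fun e => e.image f

/-- The quotient of `H` under the partition of `V(H)` into the fibers of `f`. -/
def quotientBy (H : HGraph) (f : ℕ → ℕ) : HGraph :=
  ⟨H.verts.image f, H.edges.image fun e => e.image f⟩

/-- `H'` is a quotient of `H` (by some partition of `V(H)`). -/
def IsQuotient (H H' : HGraph) : Prop := ∃ f : ℕ → ℕ, H' = quotientBy H f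

/-- Each fiber of `f` induces a connected (trimmed) subhypergraph of `H`. -/
def ContractMap (H : HGraph) (f : ℕ → ℕ) : Prop :=
  ∀ w : ℕ, (H.trim (H.verts.filter fun v => f v = w) ⊤).Connected

/-- `H'` belongs to the contract set `Q^c(H)`: it is a quotient of `H` by a partition
all of whose parts induce connected subhypergraphs of `H`. -/
def IsContractQuotient (H H' : HGraph) : Prop :=
  ∃ f : ℕ → ℕ, ContractMap H f ∧ H' = quotientBy H f

/-- `α(H')`: the number of partitions `τ` of `V(H)` with connected parts with `H/τ ≅ H'`. -/
def alphaCount (H H' : HGraph) : ℕ :=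
  Set.ncard {P : Finset (Finset ℕ) | ∃ f : ℕ → ℕ, ContractMap H f ∧
    Isomorphic (quotientBy H f) H' ∧
    P = (H.verts.image f).image fun w => H.verts.filter fun v => f v = w}

/-- `|Aut(H')|`: the number of automorphisms of `H'`. -/
def autCount (H' : HGraph) : ℕ :=
  Set.ncard {f : ℕ → ℕ | (∀ v ∉ H'.verts, f v = v) ∧ Set.BijOn f ↑H'.verts ↑H'.verts ∧
    H'.edges.image (fun e => e.image f) = H'.edges}

/-- The arc relation of the `l`-skeleton of the DAH obtained by ordering `G` by `π`. -/
def SkelArc (G : HGraph) (π : ℕ → ℕ) (l : ℕ∞) (u v : ℕ) : Prop :=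
  ∃ e ∈ G.edges, u ∈ e ∧ v ∈ e ∧ π u < π v ∧
    ((e.filter fun w => π w < π u).card : ℕ∞) ≤ l

/-- The `l`-outdegree of a vertex in the DAH `(G, π)`. -/
def loutdeg (G : HGraph) (π : ℕ → ℕ) (l : ℕ∞) (u : ℕ) : ℕ :=
  (G.verts.filter fun v => SkelArc G π l u v).card

/-- Vertices reachable from `v` by a directed path. -/
def Reach (Adj : ℕ → ℕ → Prop) (v : ℕ) : Set ℕ := {u | Relation.ReflTransGen Adj v u}

/-- Vertices reachable from a set `A`. -/
def ReachSet (Adj : ℕ → ℕ → Prop) (A : Set ℕ) : Set ℕ :=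
  {u | ∃ a ∈ A, Relation.ReflTransGen Adj a u}

/-- The sources of a DAG: vertices with no incoming arc. -/
def sourcesOf (V : Finset ℕ) (Adj : ℕ → ℕ → Prop) : Finset ℕ :=
  V.filter fun v => ¬ ∃ u ∈ V, Adj u v

/-- `b` lies on the (unique) path between `i` and `j` in `T`. -/
def OnPath {n : ℕ} (T : SimpleGraph (Fin n)) (i j b : Fin n) : Prop :=
  ∃ p : T.Walk i j, p.IsPath ∧ b ∈ p.support

/-- `(T, β)` is a DAG-tree decomposition of the DAG `(V, Adj)`. -/
def IsDTD (V : Finset ℕ) (Adj : ℕ → ℕ → Prop) {n : ℕ}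
    (T : SimpleGraph (Fin n)) (β : Fin n → Finset ℕ) : Prop :=
  T.IsTree ∧ (∀ i, β i ⊆ sourcesOf V Adj) ∧ (∀ s ∈ sourcesOf V Adj, ∃ i, s ∈ β i) ∧
    ∀ i j b, OnPath T i j b →
      ReachSet Adj ↑(β i) ∩ ReachSet Adj ↑(β j) ⊆ ReachSet Adj ↑(β b)

/-- The DAG-treewidth of the DAG `(V, Adj)`. -/
def dagTreewidth (V : Finset ℕ) (Adj : ℕ → ℕ → Prop) : ℕ :=
  sInf {w : ℕ | ∃ (n : ℕ) (T : SimpleGraph (Fin n)) (β : Fin n → Finset ℕ),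
    IsDTD V Adj T β ∧ ∀ i, (β i).card ≤ w}

/-- The `l`-DAG-treewidth of the DAH `(H, π)`. -/
def ldtwOriented (H : HGraph) (π : ℕ → ℕ) (l : ℕ∞) : ℕ :=
  dagTreewidth H.verts (SkelArc H π l)

/-- The `l`-DAG-treewidth of an undirected hypergraph:
the maximum over all acyclic orientations. -/
def ldtw (H : HGraph) (l : ℕ∞) : ℕ :=
  sSup {w : ℕ | ∃ π : ℕ → ℕ, Set.InjOn π ↑H.verts ∧ w = ldtwOriented H π l}

/-- `f` is a DAH homomorphism from `(K, πK)` to `(G, πG)`. -/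
def IsDAHHom (K : HGraph) (πK : ℕ → ℕ) (G : HGraph) (πG : ℕ → ℕ)
    (f : ℕ → ℕ) : Prop :=
  (∀ v ∈ K.verts, f v ∈ G.verts) ∧
    ∀ e ∈ K.edges, e.image f ∈ G.edges ∧
      ∀ u ∈ e, ∀ v ∈ e, πK u < πK v → πG (f u) < πG (f v)

/-- The number of DAH homomorphisms from `(K, πK)` to `(G, πG)`. -/
def dahHomCount (G : HGraph) (πG : ℕ → ℕ) (K : HGraph) (πK : ℕ → ℕ) : ℕ :=
  Set.ncard {f : ℕ → ℕ | IsDAHHom K πK G πG f ∧ ∀ v ∉ K.verts, f v = 0}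

/-- Two orderings of `H` give isomorphic acyclic orientations. -/
def OrientIso (H : HGraph) (π₁ π₂ : ℕ → ℕ) : Prop :=
  ∃ g : ℕ → ℕ, Set.BijOn g ↑H.verts ↑H.verts ∧
    (H.edges.image fun e => e.image g) = H.edges ∧
    ∀ u ∈ H.verts, ∀ v ∈ H.verts, (π₁ u < π₁ v ↔ π₂ (g u) < π₂ (g v))

/-- The vertices of `H` that are `l`-reachable from the set `S` in the DAH `(H, π)`. -/
def reachClosure (H : HGraph) (π : ℕ → ℕ) (l : ℕ∞) (S : Set ℕ) : Finset ℕ :=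
  H.verts.filter fun v => v ∈ ReachSet (SkelArc H π l) S

/-- `H⃗[S]_l`: the sub-DAH induced (0-trimmed) on the vertices `l`-reachable from `S`. -/
def subDAH (H : HGraph) (π : ℕ → ℕ) (l : ℕ∞) (S : Set ℕ) : HGraph :=
  H.trim (reachClosure H π l S) 0

/-- `B'` is a child of `B` in the tree `T` rooted at `root`. -/
def IsChild {n : ℕ} (T : SimpleGraph (Fin n)) (root B B' : Fin n) : Prop :=
  T.Adj B B' ∧ OnPath T root B' B

/-- `Γ(B)`: the union of the bags in the subtree of `T` rooted at `B`. -/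
def GammaSet {n : ℕ} (T : SimpleGraph (Fin n)) (root : Fin n)
    (β : Fin n → Finset ℕ) (B : Fin n) : Set ℕ :=
  {s | ∃ i, OnPath T root i B ∧ s ∈ β i}

/-- `ext(φ, K⃗, G⃗)` relative to the agreement domain `dom`: the number of DAH homomorphisms
from `(K, πK)` to `(G, πG)` that agree with `φ` on `V(K) ∩ dom`. -/
def extCount (K : HGraph) (πK : ℕ → ℕ) (G : HGraph) (πG : ℕ → ℕ)
    (dom : Set ℕ) (φ : ℕ → ℕ) : ℕ :=
  Set.ncard {ψ : ℕ → ℕ | IsDAHHom K πK G πG ψ ∧ (∀ v ∉ K.verts, ψ v = 0) ∧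
    ∀ v ∈ (↑K.verts : Set ℕ) ∩ dom, ψ v = φ v}

/-- The hyperedges `E_i` associated to a core `C` and a component `D`. -/
def obstructionEdges (H : HGraph) (C D : Finset ℕ) : Finset (Finset ℕ) :=
  H.edges.filter fun e => e ⊆ C ∪ D ∧ 1 < e.card

/-- `H` is an `l`-obstruction (a member of `𝓗_l`). -/
def IsLObstruction (l : ℕ∞) (H : HGraph) : Prop :=
  ∃ k, 3 ≤ k ∧ ∃ C ⊆ H.verts, C.card = k ∧
    (∀ e ∈ (H.trim C l).edges, e.card ≤ 1) ∧
    (∀ D : Finset ℕ, (H.trim (H.verts \ C) ⊤).IsComponent D →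
      ¬ C ⊆ (obstructionEdges H C D).biUnion id) ∧
    ∃ Dmap : ℕ → Finset ℕ, Set.InjOn Dmap ↑C ∧
      ∀ c ∈ C, (H.trim (H.verts \ C) ⊤).IsComponent (Dmap c) ∧
        C.erase c ⊆ (obstructionEdges H C (Dmap c)).biUnion id ∧
        ∀ e ∈ obstructionEdges H C (Dmap c), c ∉ e

/-- `H` is `𝓗_l` ITS free: no induced ∞-trimmed subhypergraph is an `l`-obstruction. -/
def ITSFree (l : ℕ∞) (H : HGraph) : Prop :=
  ∀ S ⊆ H.verts, ¬ IsLObstruction l (H.trim S ⊤)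

/-- The hypergraph `(Hv, He)` is an `l`-connector of `X ⊆ Hv`. -/
def IsConnector (l : ℕ∞) (Hv : Finset ℕ) (He : Finset (Finset ℕ)) (X : Finset ℕ) : Prop :=
  X ⊆ Hv ∧ HGraph.Connected ⟨Hv, He⟩ ∧
    (∀ e ∈ He, 2 ≤ (e ∩ X).card → l < ((e \ X).card : ℕ∞)) ∧
    ∃ V' : Finset ℕ, (HGraph.trim ⟨Hv, He⟩ (Hv \ X) ⊤).IsComponent V' ∧
      ∀ xx ∈ X, ∃ v ∈ V', ∃ e ∈ He, xx ∈ e ∧ v ∈ e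

/-- Witness data for membership of `H` in `𝓗_{l,k}`. -/
def InHlkWitness (l : ℕ∞) (k : ℕ) (H : HGraph)
    (x : ℕ → ℕ) (Vp : ℕ → Finset ℕ) (Ep : ℕ → Finset (Finset ℕ)) : Prop :=
  Set.InjOn x ↑(Finset.range k) ∧
  (∀ i < k, ∀ j < k, i ≠ j → Disjoint (Vp i) (Vp j)) ∧
  (∀ i < k, Disjoint (Vp i) ((Finset.range k).image x)) ∧
  H.verts = (Finset.range k).image x ∪ (Finset.range k).biUnion Vp ∧
  (∀ i < k, ∀ j < k, i ≠ j → Disjoint (Ep i) (Ep j)) ∧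
  H.edges = (Finset.range k).biUnion Ep ∧
  ∀ i < k,
    (∀ e ∈ Ep i, e ⊆ Vp i ∪ (((Finset.range k).image x).erase (x i))) ∧
    IsConnector l (Vp i ∪ (((Finset.range k).image x).erase (x i))) (Ep i)
      (((Finset.range k).image x).erase (x i))

/-- `H ∈ 𝓗_{l,k}`. -/
def InHlk (l : ℕ∞) (k : ℕ) (H : HGraph) : Prop :=
  ∃ x Vp Ep, InHlkWitness l k H x Vp Ep

/-- The DAG `(V, Adj)` contains a `k`-reachable-cycle. -/
def HasReachCycle (V : Finset ℕ) (Adj : ℕ → ℕ → Prop) (k : ℕ) : Prop :=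
  ∃ x y : ZMod k → ℕ, Function.Injective x ∧ Function.Injective y ∧
    (∀ i, x i ∈ V) ∧ (∀ i, y i ∈ V) ∧
    (∀ i, x i ∈ Reach Adj (y i) ∧ x (i + 1) ∈ Reach Adj (y i)) ∧
    ∀ v ∈ V, 2 ≤ (Set.range x ∩ Reach Adj v).ncard →
      ∃ i, Set.range x ∩ Reach Adj v = {x i, x (i + 1)}

/-- `(x, y)` form a `k`-reachable-simplex in the DAG `(V, Adj)`. -/
def IsReachSimplexPair (V : Finset ℕ) (Adj : ℕ → ℕ → Prop) {k : ℕ}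
    (x y : Fin k → ℕ) : Prop :=
  Function.Injective x ∧ Function.Injective y ∧
    (∀ i, x i ∈ V) ∧ (∀ i, y i ∈ V) ∧
    (∀ i j, j ≠ i → x j ∈ Reach Adj (y i)) ∧
    ¬ ∃ v ∈ V, ∀ i, x i ∈ Reach Adj v

/-- The DAG `(V, Adj)` contains a `k`-reachable-simplex. -/
def HasReachSimplex (V : Finset ℕ) (Adj : ℕ → ℕ → Prop) (k : ℕ) : Prop :=
  ∃ x y : Fin k → ℕ, IsReachSimplexPair V Adj x y

/-- `F` is α-acyclic. -/
def IsAlphaAcyclic (F : HGraph) : Prop :=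
  ∃ (n : ℕ) (T : SimpleGraph (Fin n)) (f : Fin n → Finset ℕ),
    T.IsTree ∧ Function.Injective f ∧ (∀ i, f i ∈ F.edges) ∧
    (∀ e ∈ F.edges, ∃ i, f i = e) ∧
    ∀ i j b, OnPath T i j b → f i ∩ f j ⊆ f b

/-- The reachability hypergraph of the DAG `(V, Adj)`. -/
def reachHypergraph (V : Finset ℕ) (Adj : ℕ → ℕ → Prop) : HGraph :=
  ⟨V, (sourcesOf V Adj).image fun s => V.filter fun v => v ∈ Reach Adj s⟩

/-- The clique completion of a hypergraph. -/
def cliqueCompletion (H : HGraph) : SimpleGraph ℕ where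
  Adj u v := u ≠ v ∧ ∃ e ∈ H.edges, u ∈ e ∧ v ∈ e
  symm := by
    constructor
    intro u v h
    obtain ⟨huv, e, he, hu, hv⟩ := h
    exact ⟨huv.symm, e, he, hv, hu⟩
  loopless := by
    constructor
    intro u h
    exact h.1 rfl

/-- `G` has an induced cycle on `n` vertices. -/
def HasInducedCycle (G : SimpleGraph ℕ) (n : ℕ) : Prop :=
  ∃ f : ZMod n → ℕ, Function.Injective f ∧
    ∀ i j : ZMod n, G.Adj (f i) (f j) ↔ (j = i + 1 ∨ i = j + 1)

/-- The number of colorful homomorphisms from `H` to `G` under the coloring `c`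
(with color set `{1, …, |V(H)|}`). -/
def colHomCount (G H : HGraph) (c : ℕ → ℕ) : ℕ :=
  Set.ncard {f : ℕ → ℕ | IsHom H G f ∧ (∀ v ∉ H.verts, f v = 0) ∧
    Set.BijOn (fun v => c (f v)) ↑H.verts ↑(Finset.Icc 1 H.verts.card)}

/-- The tensor product of hypergraphs (vertex pairs encoded by `Nat.pair`). -/
def tensor (G H : HGraph) : HGraph :=
  ⟨(G.verts ×ˢ H.verts).image fun p => Nat.pair p.1 p.2,
    ((G.verts ×ˢ H.verts).image fun p => Nat.pair p.1 p.2).powerset.filter fun e =>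
      (e.image fun m => (Nat.unpair m).1) ∈ G.edges ∧
      (e.image fun m => (Nat.unpair m).2) ∈ H.edges⟩

/-- `Sub(G,H)`: the number of subhypergraphs of `G` isomorphic to `H`. -/
def subCount (G H : HGraph) : ℕ :=
  Set.ncard {p : Finset ℕ × Finset (Finset ℕ) |
    p.1 ⊆ G.verts ∧ (∀ e ∈ p.2, e ∈ G.edges ∧ e ⊆ p.1) ∧ Isomorphic H ⟨p.1, p.2⟩}

/-- Vertex renaming used in the construction of `G^H_l`:
core vertices go to the matching vertex of the colorful hyperedge `e` of `G`,
vertices of `H'` outside the core go to their fresh copy indexed by `e`, and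
vertices outside `H'` go to their unique copy. -/
def liftVert (S X : Finset ℕ) (π c : ℕ → ℕ) (e : Finset ℕ) (v : ℕ) : ℕ :=
  if v ∈ X then Nat.pair 0 ((e.filter fun u => c u = π v).sum id)
  else if v ∈ S then Nat.pair 2 (Nat.pair (Encodable.encode e) v)
  else Nat.pair 1 v

/-- The hypergraph `G^H_l` from the hardness construction. -/
def GHl (H G : HGraph) (S X : Finset ℕ) (Vp : ℕ → Finset ℕ) (π c : ℕ → ℕ)
    (k : ℕ) : HGraph :=
  ⟨(G.verts.image fun v => Nat.pair 0 v) ∪ ((H.verts \ S).image fun v => Nat.pair 1 v) ∪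
      (Finset.range k).biUnion fun i =>
        (G.edges.filter fun e => e.card = k - 1 ∧ e.image c = (Finset.range k).erase i).biUnion
          fun e => (Vp i).image fun v => Nat.pair 2 (Nat.pair (Encodable.encode e) v),
    ((H.edges.filter fun e => e ⊆ H.verts \ S).image fun e => e.image fun v => Nat.pair 1 v) ∪
      (Finset.range k).biUnion fun i =>
        (G.edges.filter fun e => e.card = k - 1 ∧ e.image c = (Finset.range k).erase i).biUnion
          fun e =>
            (H.edges.filter fun e' => ¬ e' ⊆ H.verts \ S ∧
                e' ⊆ X ∪ Vp i ∪ (H.verts \ S)).image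
              fun e' => e'.image (liftVert S X π c e)⟩

/-- The coloring of `G^H_l`. -/
def GHlColor (π c : ℕ → ℕ) (m : ℕ) : ℕ :=
  if (Nat.unpair m).1 = 0 then c (Nat.unpair m).2
  else if (Nat.unpair m).1 = 1 then π (Nat.unpair m).2
  else π (Nat.unpair (Nat.unpair m).2).2

/-- The grouping of the vertices of `G^H_l`: copied vertices first,
then the vertices of `G`, then the vertices of `V^ext`. -/
def GHlGroup (m : ℕ) : ℕ :=
  if (Nat.unpair m).1 = 2 then 0 else if (Nat.unpair m).1 = 0 then 1 else 2

/-!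
Peel off, one at a time, a vertex of least degree in the `l`-trimmed subhypergraph induced on
the vertices still present, and order the vertices by removal time. An arc `u → v` of the
`l`-skeleton comes from a hyperedge with at most `l` vertices before `u`, so this hyperedge
survives, trimmed, in the subhypergraph present when `u` is removed. There `u` lies in at most
`κ_l(G)` hyperedges, each with at most `r(G)` vertices.
-/

theorem Finset.exists_eliminationOrder {α : Type*} (P : Finset α → α → Prop) (V : Finset α)
    (hP : ∀ S ⊆ V, S.Nonempty → ∃ v ∈ S, P S v) :
    ∃ π : α → ℕ, Set.InjOn π V ∧ ∀ v ∈ V, P (V.filter fun w => π v ≤ π w) v := by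
  induction V using Finset.strongInduction with
  | H V ih =>
  rcases V.eq_empty_or_nonempty with rfl | hV
  · exact ⟨fun _ => 0, by simp, by simp⟩
  obtain ⟨v, hv, hPv⟩ := hP V subset_rfl hV
  obtain ⟨π', hinj', hπ'⟩ := ih (V.erase v) (Finset.erase_ssubset hv)
    fun S hS => hP S (hS.trans (Finset.erase_subset v V))
  refine ⟨fun w => if w = v then 0 else π' w + 1, ?_, ?_⟩
  · intro a ha b hb hab
    by_cases hav : a = v <;> by_cases hbv : b = v <;> simp [hav, hbv] at hab ⊢
    exact hinj' (Finset.mem_erase.2 ⟨hav, ha⟩) (Finset.mem_erase.2 ⟨hbv, hb⟩) hab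
  · intro w hw
    by_cases hwv : w = v
    · subst hwv
      simpa using hPv
    · convert hπ' w (Finset.mem_erase.2 ⟨hwv, hw⟩) using 1
      ext x
      by_cases hxv : x = v <;> simp [hxv, hwv]

namespace HGraph

theorem degree_le_card_edges (G : HGraph) (v : ℕ) : G.degree v ≤ G.edges.card :=
  Finset.card_filter_le _ _

theorem card_edges_trim_le (G : HGraph) (S : Finset ℕ) (l : ℕ∞) :
    (G.trim S l).edges.card ≤ G.edges.card :=
  Finset.card_image_le.trans (Finset.card_filter_le _ _)

theorem exists_degree_trim_le_degeneracy (G : HGraph) (l : ℕ∞) :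
    ∀ S ⊆ G.verts, S.Nonempty → ∃ v ∈ S, (G.trim S l).degree v ≤ G.degeneracy l := by
  have hne : {κ : ℕ | ∀ S ⊆ G.verts, S.Nonempty → ∃ v ∈ S, (G.trim S l).degree v ≤ κ}.Nonempty :=
    ⟨G.edges.card, fun S _ ⟨v, hv⟩ =>
      ⟨v, hv, ((G.trim S l).degree_le_card_edges v).trans (G.card_edges_trim_le S l)⟩⟩
  exact Nat.sInf_mem hne

theorem card_le_rank_of_mem_trim {G : HGraph} {S : Finset ℕ} {l : ℕ∞} {e : Finset ℕ}
    (he : e ∈ (G.trim S l).edges) : e.card ≤ G.rank := by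
  obtain ⟨e₀, he₀, rfl⟩ := Finset.mem_image.1 he
  exact (Finset.card_le_card Finset.inter_subset_left).trans
    (Finset.le_sup (Finset.mem_filter.1 he₀).1)

theorem sdiff_filter_le_eq_filter_lt {V e : Finset ℕ} (he : e ⊆ V) (π : ℕ → ℕ) (u : ℕ) :
    e \ V.filter (fun w => π u ≤ π w) = e.filter fun w => π w < π u := by
  ext w
  by_cases hw : w ∈ e
  · simp [hw, he hw]
  · simp [hw]

theorem exists_mem_trim_of_skelArc {G : HGraph} (hG : G.Good) {π : ℕ → ℕ} {l : ℕ∞} {u v : ℕ}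
    (huv : SkelArc G π l u v) :
    ∃ e ∈ (G.trim (G.verts.filter fun w => π u ≤ π w) l).edges, u ∈ e ∧ v ∈ e := by
  obtain ⟨e, he, hue, hve, hlt, hcard⟩ := huv
  have heV := (hG e he).1
  refine ⟨e ∩ G.verts.filter fun w => π u ≤ π w, Finset.mem_image_of_mem _ ?_, ?_, ?_⟩
  · rw [Finset.mem_filter, sdiff_filter_le_eq_filter_lt heV]
    exact ⟨he, hcard, u, by simp [hue, heV hue]⟩
  · simp [hue, heV hue]
  · simp [hve, heV hve, hlt.le]

theorem loutdeg_le_degree_trim_mul_rank {G : HGraph} (hG : G.Good) (π : ℕ → ℕ) (l : ℕ∞)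
    (u : ℕ) :
    loutdeg G π l u ≤ (G.trim (G.verts.filter fun w => π u ≤ π w) l).degree u * G.rank := by
  set T := (G.trim (G.verts.filter fun w => π u ≤ π w) l).edges.filter fun e => u ∈ e
  have hsub : (G.verts.filter fun v => SkelArc G π l u v) ⊆ T.biUnion id := by
    intro v hv
    obtain ⟨e, he, hue, hve⟩ := exists_mem_trim_of_skelArc hG (Finset.mem_filter.1 hv).2
    exact Finset.mem_biUnion.2 ⟨e, Finset.mem_filter.2 ⟨he, hue⟩, hve⟩
  exact (Finset.card_le_card hsub).trans <| T.card_biUnion_le_card_mul _ _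
    fun e he => card_le_rank_of_mem_trim (Finset.mem_filter.1 he).1

end HGraph

theorem stmt0 (l : ℕ∞) (G : HGraph) (hG : G.Good) :
    ∃ π : ℕ → ℕ, Set.InjOn π ↑G.verts ∧
      ∀ v ∈ G.verts, loutdeg G π l v ≤ G.degeneracy l * G.rank := by
  obtain ⟨π, hinj, hπ⟩ := Finset.exists_eliminationOrder
    (fun S v => (G.trim S l).degree v ≤ G.degeneracy l) G.verts
    (G.exists_degree_trim_le_degeneracy l)
  exact ⟨π, hinj, fun v hv =>
    (HGraph.loutdeg_le_degree_trim_mul_rank hG π l v).trans (Nat.mul_le_mul_right _ (hπ v hv))⟩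

end
end

section
/- Let l ∈ ℕ ∪ {∞} and let H be a hypergraph. For every hypergraph H′ in the contract set Q^c(H), the l-DAG-treewidth satisfies τ_l(H′) ≤ τ_l(H). -/
open scoped Classical

noncomputable section

/-!
Fix an ordering `π'` of the quotient `H/f`. Order `V(H)` by `π'` of the fibre first and, inside
a fibre, by the distance from the vertices through which an earlier fibre enters it. Then every
vertex of an entered fibre has an in-arc, so sources of `Sk_l(H)` map to sources of `Sk_l(H/f)`;
the least vertex of a source fibre is a source, so this map is onto; and arcs between distinct
fibres map to arcs. So the images of the bags of a DAG-tree decomposition of `Sk_l(H)` are sets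
of sources of `Sk_l(H/f)` covering all of them, and no larger than the original bags.

They also satisfy the separation property. Let `u'` be reachable from the images of sources
`s ∈ β i` and `t ∈ β j`, and call a tree node good if its bag has a source reaching some `z`
such that `f z` reaches `u'`. Because the fibres are connected, `s` and `t` are joined by a chain
of sources in which consecutive ones have such a `z` as a common descendant. The separation
property of the original decomposition makes every node on the tree path between bags of
consecutive sources good, so the good nodes connect `i` to `j` and contain the path between them.
-/

open Finset Relation

section DAG

variable {V : Finset ℕ} {Adj : ℕ → ℕ → Prop}

theorem exists_mem_sourcesOf_reflTransGen (rk : ℕ → ℕ) (hrk : ∀ u v, Adj u v → rk u < rk v)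
    {v : ℕ} (hv : v ∈ V) : ∃ s ∈ sourcesOf V Adj, ReflTransGen Adj s v := by
  induction hn : rk v using Nat.strong_induction_on generalizing v with
  | _ n ih =>
  by_cases hsrc : v ∈ sourcesOf V Adj
  · exact ⟨v, hsrc, .refl⟩
  · obtain ⟨u, hu, huv⟩ : ∃ u ∈ V, Adj u v := by simpa [sourcesOf, hv] using hsrc
    obtain ⟨s, hs, hsu⟩ := ih (rk u) (hn ▸ hrk u v huv) hu rfl
    exact ⟨s, hs, hsu.tail huv⟩

def ReachLink (V : Finset ℕ) (Adj : ℕ → ℕ → Prop) (Z : Set ℕ) (a b : ℕ) : Prop :=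
  a ∈ sourcesOf V Adj ∧ b ∈ sourcesOf V Adj ∧
    ∃ z ∈ Z, ReflTransGen Adj a z ∧ ReflTransGen Adj b z

theorem ReachLink.symm {Z : Set ℕ} {a b : ℕ} (h : ReachLink V Adj Z a b) :
    ReachLink V Adj Z b a := by
  obtain ⟨ha, hb, z, hz, haz, hbz⟩ := h
  exact ⟨hb, ha, z, hz, hbz, haz⟩

theorem ReachLink.mono {Z Z' : Set ℕ} (hZ : Z ⊆ Z') {a b : ℕ} (h : ReachLink V Adj Z a b) :
    ReachLink V Adj Z' a b := by
  obtain ⟨ha, hb, z, hz, haz, hbz⟩ := h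
  exact ⟨ha, hb, z, hZ hz, haz, hbz⟩

def WalkWithin {n : ℕ} (T : SimpleGraph (Fin n)) (N : Set (Fin n)) (i j : Fin n) : Prop :=
  ∃ p : T.Walk i j, ∀ c ∈ p.support, c ∈ N

section Tree

variable {n : ℕ} {T : SimpleGraph (Fin n)} {N : Set (Fin n)}

theorem WalkWithin.trans {i j k : Fin n} (h₁ : WalkWithin T N i j) (h₂ : WalkWithin T N j k) :
    WalkWithin T N i k := by
  obtain ⟨p, hp⟩ := h₁
  obtain ⟨q, hq⟩ := h₂
  refine ⟨p.append q, fun c hc => ?_⟩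
  rw [SimpleGraph.Walk.support_append, List.mem_append] at hc
  exact hc.elim (hp c) fun h => hq c (List.mem_of_mem_tail h)

theorem OnPath.mem_of_walkWithin (hT : T.IsAcyclic) {i j b : Fin n}
    (hb : OnPath T i j b) (h : WalkWithin T N i j) : b ∈ N := by
  obtain ⟨q, hq, hbq⟩ := hb
  obtain ⟨p, hp⟩ := h
  have hqp : (⟨q, hq⟩ : T.Path i j) = p.toPath := (hT.subsingleton_path i j).elim _ _
  refine hp b (p.support_toPath_subset_support ?_)
  rw [← hqp]
  exact hbq

variable {β : Fin n → Finset ℕ} {Z : Set ℕ}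

theorem IsDTD.walkWithin_of_reachLink (hD : IsDTD V Adj T β) {a b : ℕ} {i j : Fin n}
    (hab : ReachLink V Adj Z a b) (ha : a ∈ β i) (hb : b ∈ β j) :
    WalkWithin T {c | (ReachSet Adj ↑(β c) ∩ Z).Nonempty} i j := by
  obtain ⟨-, -, z, hz, haz, hbz⟩ := hab
  obtain ⟨p⟩ := hD.1.connected.preconnected i j
  exact ⟨p.toPath, fun c hc =>
    ⟨z, hD.2.2.2 i j c ⟨_, p.toPath.2, hc⟩ ⟨⟨a, ha, haz⟩, b, hb, hbz⟩, hz⟩⟩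

theorem IsDTD.walkWithin_of_reflTransGen (hD : IsDTD V Adj T β) {s t : ℕ} {i j : Fin n}
    (hst : ReflTransGen (ReachLink V Adj Z) s t) (hss : ReachLink V Adj Z s s)
    (hs : s ∈ β i) (ht : t ∈ β j) :
    WalkWithin T {c | (ReachSet Adj ↑(β c) ∩ Z).Nonempty} i j := by
  induction hst generalizing j with
  | refl => exact hD.walkWithin_of_reachLink hss hs ht
  | tail _ hat ih =>
    obtain ⟨k, hak⟩ := hD.2.2.1 _ hat.1
    exact (ih hak).trans (hD.walkWithin_of_reachLink hat hak ht)

end Tree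

theorem isDTD_single (V : Finset ℕ) (Adj : ℕ → ℕ → Prop) :
    IsDTD V Adj (⊥ : SimpleGraph (Fin 1)) fun _ => sourcesOf V Adj :=
  ⟨⟨SimpleGraph.Connected.mk fun v w => by rw [Subsingleton.elim v w],
      SimpleGraph.isAcyclic_bot⟩,
    fun _ => Subset.rfl, fun _ hs => ⟨0, hs⟩, fun _ _ _ _ => Set.inter_subset_left⟩

theorem exists_isDTD_card_le_dagTreewidth (V : Finset ℕ) (Adj : ℕ → ℕ → Prop) :
    ∃ (n : ℕ) (T : SimpleGraph (Fin n)) (β : Fin n → Finset ℕ),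
      IsDTD V Adj T β ∧ ∀ i, #(β i) ≤ dagTreewidth V Adj := by
  refine Nat.sInf_mem (s := {w | ∃ (n : ℕ) (T : SimpleGraph (Fin n)) (β : Fin n → Finset ℕ),
    IsDTD V Adj T β ∧ ∀ i, #(β i) ≤ w}) ⟨_, 1, ⊥, _, isDTD_single V Adj, fun _ => le_rfl⟩

theorem dagTreewidth_le_card (V : Finset ℕ) (Adj : ℕ → ℕ → Prop) :
    dagTreewidth V Adj ≤ #V :=
  Nat.sInf_le ⟨1, ⊥, _, isDTD_single V Adj, fun _ => card_le_card (filter_subset _ _)⟩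

end DAG

section Skeleton

variable {G : HGraph} {σ : ℕ → ℕ} {l : ℕ∞}

theorem SkelArc.lt {u v : ℕ} (h : SkelArc G σ l u v) : σ u < σ v := by
  obtain ⟨_, _, _, _, hlt, _⟩ := h
  exact hlt

theorem skelArc_of_forall_le {e : Finset ℕ} {m v : ℕ} (he : e ∈ G.edges) (hm : m ∈ e)
    (hmin : ∀ x ∈ e, σ m ≤ σ x) (hv : v ∈ e) (hlt : σ m < σ v) : SkelArc G σ l m v := by
  refine ⟨e, he, hm, hv, hlt, ?_⟩
  rw [filter_eq_empty_iff.2 fun x hx => not_lt.2 (hmin x hx)]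
  simp

theorem exists_source_reflTransGen_of_mem_edges (hG : G.Good) (hσ : Set.InjOn σ G.verts)
    {e : Finset ℕ} (he : e ∈ G.edges) :
    ∃ r ∈ sourcesOf G.verts (SkelArc G σ l), ∀ v ∈ e, ReflTransGen (SkelArc G σ l) r v := by
  obtain ⟨m, hm, hmin⟩ := exists_min_image e σ (hG e he).2
  obtain ⟨r, hr, hrm⟩ :=
    exists_mem_sourcesOf_reflTransGen σ (fun _ _ h => SkelArc.lt (l := l) h) ((hG e he).1 hm)
  refine ⟨r, hr, fun v hv => ?_⟩
  rcases eq_or_ne m v with rfl | hmv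
  · exact hrm
  · refine hrm.tail (skelArc_of_forall_le he hm hmin hv ((hmin v hv).lt_of_ne fun h => hmv ?_))
    exact hσ ((hG e he).1 hm) ((hG e he).1 hv) h

end Skeleton

def blockGraph (H : HGraph) (f : ℕ → ℕ) : SimpleGraph ℕ :=
  SimpleGraph.fromRel fun x y => f x = f y ∧ H.Adj x y

section Blocks

variable {H : HGraph} {f : ℕ → ℕ}

theorem blockGraph_adj {x y : ℕ} :
    (blockGraph H f).Adj x y ↔ x ≠ y ∧ f x = f y ∧ ∃ e ∈ H.edges, x ∈ e ∧ y ∈ e := by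
  simp only [blockGraph, SimpleGraph.fromRel_adj, HGraph.Adj]
  constructor
  · rintro ⟨hne, ⟨hf, e, he, hx, hy⟩ | ⟨hf, e, he, hy, hx⟩⟩
    · exact ⟨hne, hf, e, he, hx, hy⟩
    · exact ⟨hne, hf.symm, e, he, hx, hy⟩
  · rintro ⟨hne, hf, e, he, hx, hy⟩
    exact ⟨hne, .inl ⟨hf, e, he, hx, hy⟩⟩

theorem apply_eq_of_reachable_blockGraph {x y : ℕ} (h : (blockGraph H f).Reachable x y) :
    f x = f y := by
  rw [SimpleGraph.reachable_iff_reflTransGen] at h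
  induction h with
  | refl => rfl
  | tail _ hyz ih => exact ih.trans (blockGraph_adj.1 hyz).2.1

theorem ContractMap.reachable (hf : ContractMap H f) {x y : ℕ} (hx : x ∈ H.verts)
    (hy : y ∈ H.verts) (hxy : f x = f y) : (blockGraph H f).Reachable x y := by
  have hconn := hf (f x) x (by simp [HGraph.trim, hx]) y (by simp [HGraph.trim, hy, hxy])
  rw [SimpleGraph.reachable_iff_reflTransGen]
  refine ReflTransGen.lift' id (fun u v huv => ?_) x y hconn
  obtain ⟨_, he', hu, hv⟩ := huv
  obtain ⟨e, he, rfl⟩ := mem_image.1 he'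
  simp only [mem_inter, mem_filter] at hu hv
  rcases eq_or_ne u v with rfl | huv
  · exact .refl
  · exact .single (blockGraph_adj.2 ⟨huv, hu.2.2.trans hv.2.2.symm, e, (mem_filter.1 he).1,
      hu.1, hv.1⟩)

end Blocks

section Chains

variable {H : HGraph} {f π' π : ℕ → ℕ} {l : ℕ∞}

/-- The induction runs along a path of `blockGraph` from `p` to `q`: each of its edges lies in
a hyperedge, all of whose vertices are reached from a single source. -/
theorem reflTransGen_reachLink_of_reachable (hH : H.Good) (hπ : Set.InjOn π H.verts)
    {Z : Set ℕ} {p q a b : ℕ} (hZ : ∀ z, f z = f p → z ∈ Z)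
    (hpq : (blockGraph H f).Reachable p q)
    (ha : a ∈ sourcesOf H.verts (SkelArc H π l)) (hap : ReflTransGen (SkelArc H π l) a p)
    (hb : b ∈ sourcesOf H.verts (SkelArc H π l)) (hbq : ReflTransGen (SkelArc H π l) b q) :
    ReflTransGen (ReachLink H.verts (SkelArc H π l) Z) a b := by
  rw [SimpleGraph.reachable_iff_reflTransGen] at hpq
  induction hpq generalizing b with
  | refl => exact .single ⟨ha, hb, p, hZ p rfl, hap, hbq⟩
  | @tail c q hpc hcq ih =>
    obtain ⟨-, -, e, he, hce, hqe⟩ := blockGraph_adj.1 hcq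
    obtain ⟨r, hr, hre⟩ := exists_source_reflTransGen_of_mem_edges (l := l) hH hπ he
    have hqZ : q ∈ Z := hZ q (apply_eq_of_reachable_blockGraph
      ((SimpleGraph.reachable_iff_reflTransGen _ _).2 (hpc.tail hcq))).symm
    exact (ih hr (hre c hce)).tail ⟨hr, hb, q, hqZ, hre q hqe, hbq⟩

/-- Induction along the path from `f s` to `u'`: an arc `x' → u'` lies in the image of a
hyperedge all of whose vertices are reached from a single source, which therefore reaches both
the fibre of `x'` and that of `u'`. -/
theorem exists_reachLink_of_reflTransGen_quotientBy (hH : H.Good) (hf : ContractMap H f)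
    (hπ : Set.InjOn π H.verts) {s u' : ℕ} (hs : s ∈ sourcesOf H.verts (SkelArc H π l))
    (hsu : ReflTransGen (SkelArc (quotientBy H f) π' l) (f s) u') :
    ∃ a ∈ sourcesOf H.verts (SkelArc H π l), ∃ p ∈ H.verts, f p = u' ∧
      ReflTransGen (SkelArc H π l) a p ∧
      ReflTransGen (ReachLink H.verts (SkelArc H π l)
        {z | ReflTransGen (SkelArc (quotientBy H f) π' l) (f z) u'}) s a := by
  induction hsu with
  | refl => exact ⟨s, hs, s, (mem_filter.1 hs).1, rfl, .refl, .refl⟩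
  | @tail x' u' _ hxu ih =>
    obtain ⟨a, ha, p, hp, hpx, hap, hsa⟩ := ih
    have hZ : {z | ReflTransGen (SkelArc (quotientBy H f) π' l) (f z) x'} ⊆
        {z | ReflTransGen (SkelArc (quotientBy H f) π' l) (f z) u'} := fun _ hz => hz.tail hxu
    obtain ⟨_, he', hxe, hue, -⟩ := hxu
    obtain ⟨e, he, rfl⟩ := mem_image.1 he'
    obtain ⟨x, hx, rfl⟩ := mem_image.1 hxe
    obtain ⟨q, hq, rfl⟩ := mem_image.1 hue
    obtain ⟨r, hr, hre⟩ := exists_source_reflTransGen_of_mem_edges (l := l) hH hπ he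
    have har := reflTransGen_reachLink_of_reachable hH hπ
      (Z := {z | ReflTransGen (SkelArc (quotientBy H f) π' l) (f z) (f x)})
      (fun z hz => show ReflTransGen _ (f z) (f x) by rw [hz, hpx])
      (hf.reachable hp ((hH e he).1 hx) hpx) ha hap hr (hre x hx)
    refine ⟨r, hr, q, (hH e he).1 hq, rfl, hre q hq,
      ReflTransGen.mono (fun _ _ h => ReachLink.mono hZ h) _ _ (hsa.trans har)⟩

theorem reflTransGen_reachLink_of_reflTransGen_quotientBy (hH : H.Good) (hf : ContractMap H f)
    (hπ : Set.InjOn π H.verts) {s t u' : ℕ}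
    (hs : s ∈ sourcesOf H.verts (SkelArc H π l)) (ht : t ∈ sourcesOf H.verts (SkelArc H π l))
    (hsu : ReflTransGen (SkelArc (quotientBy H f) π' l) (f s) u')
    (htu : ReflTransGen (SkelArc (quotientBy H f) π' l) (f t) u') :
    ReflTransGen (ReachLink H.verts (SkelArc H π l)
      {z | ReflTransGen (SkelArc (quotientBy H f) π' l) (f z) u'}) s t := by
  obtain ⟨a, ha, p, hp, hpu, hap, hsa⟩ :=
    exists_reachLink_of_reflTransGen_quotientBy hH hf hπ hs hsu
  obtain ⟨b, hb, q, hq, hqu, hbq, htb⟩ :=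
    exists_reachLink_of_reflTransGen_quotientBy hH hf hπ ht htu
  have hab := reflTransGen_reachLink_of_reachable hH hπ
    (Z := {z | ReflTransGen (SkelArc (quotientBy H f) π' l) (f z) u'})
    (fun z hz => show ReflTransGen _ (f z) u' by rw [hz, hpu])
    (hf.reachable hp hq (hpu.trans hqu.symm)) ha hap hb hbq
  exact (hsa.trans hab).trans (ReflTransGen.mono (fun _ _ h => ReachLink.symm h) _ _ htb.swap)

end Chains

def entries (H : HGraph) (f π' : ℕ → ℕ) (w : ℕ) : Set ℕ :=
  {p | ∃ e ∈ H.edges, p ∈ e ∧ f p = w ∧ ∃ x ∈ e, π' (f x) < π' w}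

structure IsLiftOrder (H : HGraph) (f π' π : ℕ → ℕ) : Prop where
  injOn : Set.InjOn π H.verts
  lt_of_lt : ∀ u ∈ H.verts, ∀ v ∈ H.verts, π' (f u) < π' (f v) → π u < π v
  exists_lt : ∀ v ∈ H.verts, (entries H f π' (f v)).Nonempty →
    ∃ e ∈ H.edges, v ∈ e ∧ ∃ u ∈ e, π u < π v

namespace IsLiftOrder

variable {H : HGraph} {f π' π : ℕ → ℕ} {l : ℕ∞}

theorem le_of_le (hπ : IsLiftOrder H f π' π) {u v : ℕ} (hu : u ∈ H.verts) (hv : v ∈ H.verts)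
    (h : π u ≤ π v) : π' (f u) ≤ π' (f v) :=
  not_lt.1 fun h' => (hπ.lt_of_lt v hv u hu h').not_ge h

theorem lt_of_lt_of_ne (hπ' : Set.InjOn π' (quotientBy H f).verts) (hπ : IsLiftOrder H f π' π)
    {u v : ℕ} (hu : u ∈ H.verts) (hv : v ∈ H.verts) (hne : f u ≠ f v) (h : π u < π v) :
    π' (f u) < π' (f v) :=
  (hπ.le_of_le hu hv h.le).lt_of_ne fun heq =>
    hne (hπ' (mem_image_of_mem f hu) (mem_image_of_mem f hv) heq)

/-- Predecessors of `f u` in `e.image f` are images of predecessors of `u` in `e`, so an arc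
between distinct fibres survives the `l`-trimming. -/
theorem skelArc_quotientBy (hH : H.Good) (hπ' : Set.InjOn π' (quotientBy H f).verts)
    (hπ : IsLiftOrder H f π' π) {u v : ℕ} (h : SkelArc H π l u v) (hne : f u ≠ f v) :
    SkelArc (quotientBy H f) π' l (f u) (f v) := by
  obtain ⟨e, he, hu, hv, hlt, hcard⟩ := h
  have hu' := (hH e he).1 hu
  refine ⟨e.image f, mem_image_of_mem _ he, mem_image_of_mem f hu, mem_image_of_mem f hv,
    hπ.lt_of_lt_of_ne hπ' hu' ((hH e he).1 hv) hne hlt, le_trans ?_ hcard⟩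
  refine Nat.cast_le.2 (card_le_card_of_surjOn f fun y' hy' => ?_)
  obtain ⟨hy'e, hy'lt⟩ := mem_filter.1 hy'
  obtain ⟨y, hy, rfl⟩ := mem_image.1 hy'e
  exact ⟨y, mem_filter.2 ⟨hy, hπ.lt_of_lt y ((hH e he).1 hy) u hu' hy'lt⟩, rfl⟩

theorem reflTransGen_quotientBy (hH : H.Good) (hπ' : Set.InjOn π' (quotientBy H f).verts)
    (hπ : IsLiftOrder H f π' π) {u v : ℕ} (h : ReflTransGen (SkelArc H π l) u v) :
    ReflTransGen (SkelArc (quotientBy H f) π' l) (f u) (f v) := by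
  induction h with
  | refl => exact .refl
  | @tail b c _ hbc ih =>
    by_cases hfbc : f b = f c
    · rwa [← hfbc]
    · exact ih.tail (hπ.skelArc_quotientBy hH hπ' hbc hfbc)

/-- An in-arc of `f s` in the quotient gives the fibre of `s` an entry vertex, and then
`IsLiftOrder.exists_lt` gives `s` itself an in-arc. -/
theorem apply_mem_sourcesOf (hH : H.Good) (hπ : IsLiftOrder H f π' π) {s : ℕ}
    (hs : s ∈ sourcesOf H.verts (SkelArc H π l)) :
    f s ∈ sourcesOf (quotientBy H f).verts (SkelArc (quotientBy H f) π' l) := by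
  obtain ⟨hsV, hnoarc⟩ := mem_filter.1 hs
  refine mem_filter.2 ⟨mem_image_of_mem f hsV, ?_⟩
  rintro ⟨_, -, _, he', hxe, hse, hlt, -⟩
  obtain ⟨e, he, rfl⟩ := mem_image.1 he'
  obtain ⟨x, hx, rfl⟩ := mem_image.1 hxe
  obtain ⟨p, hp, hps⟩ := mem_image.1 hse
  obtain ⟨e₂, he₂, hse₂, u, hu, hus⟩ := hπ.exists_lt s hsV ⟨p, e, he, hp, hps, x, hx, hlt⟩
  obtain ⟨m, hm, hmin⟩ := exists_min_image e₂ π ⟨s, hse₂⟩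
  exact hnoarc ⟨m, (hH e₂ he₂).1 hm,
    skelArc_of_forall_le he₂ hm hmin hse₂ ((hmin u hu).trans_lt hus)⟩

/-- The `π`-least vertex of a fibre that is a source of the quotient is a source. -/
theorem exists_mem_sourcesOf_apply_eq (hH : H.Good) (hπ' : Set.InjOn π' (quotientBy H f).verts)
    (hπ : IsLiftOrder H f π' π) {s' : ℕ}
    (hs' : s' ∈ sourcesOf (quotientBy H f).verts (SkelArc (quotientBy H f) π' l)) :
    ∃ s ∈ sourcesOf H.verts (SkelArc H π l), f s = s' := by
  obtain ⟨hs'V, hnoarc⟩ := mem_filter.1 hs'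
  obtain ⟨v, hv, hfv⟩ := mem_image.1 hs'V
  obtain ⟨s, hs, hsmin⟩ :=
    exists_min_image (H.verts.filter fun v => f v = s') π ⟨v, mem_filter.2 ⟨hv, hfv⟩⟩
  obtain ⟨hsV, hfs⟩ := mem_filter.1 hs
  refine ⟨s, mem_filter.2 ⟨hsV, ?_⟩, hfs⟩
  rintro ⟨u, -, e, he, hu, hse, hlt, -⟩
  obtain ⟨m, hm, hmin⟩ := exists_min_image e π ⟨s, hse⟩
  have hmV := (hH e he).1 hm
  have hms : π m < π s := (hmin u hu).trans_lt hlt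
  by_cases hfm : f m = s'
  · exact (hsmin m (mem_filter.2 ⟨hmV, hfm⟩)).not_gt hms
  · refine hnoarc ⟨f m, mem_image_of_mem f hmV, skelArc_of_forall_le (mem_image_of_mem _ he)
      (mem_image_of_mem f hm) ?_ (hfs ▸ mem_image_of_mem f hse)
      (hfs ▸ hπ.lt_of_lt_of_ne hπ' hmV hsV (hfs ▸ hfm) hms)⟩
    rintro _ hy'
    obtain ⟨y, hy, rfl⟩ := mem_image.1 hy'
    exact hπ.le_of_le hmV ((hH e he).1 hy) (hmin y hy)

theorem isDTD_quotientBy (hH : H.Good) (hf : ContractMap H f)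
    (hπ' : Set.InjOn π' (quotientBy H f).verts) (hπ : IsLiftOrder H f π' π) {n : ℕ}
    {T : SimpleGraph (Fin n)} {β : Fin n → Finset ℕ} (hD : IsDTD H.verts (SkelArc H π l) T β) :
    IsDTD (quotientBy H f).verts (SkelArc (quotientBy H f) π' l) T fun i => (β i).image f := by
  refine ⟨hD.1, fun i s' hs' => ?_, fun s' hs' => ?_, ?_⟩
  · obtain ⟨s, hs, rfl⟩ := mem_image.1 hs'
    exact hπ.apply_mem_sourcesOf hH (hD.2.1 i hs)
  · obtain ⟨s, hs, rfl⟩ := hπ.exists_mem_sourcesOf_apply_eq hH hπ' hs'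
    obtain ⟨i, hi⟩ := hD.2.2.1 s hs
    exact ⟨i, mem_image_of_mem f hi⟩
  · rintro i j b hb u' ⟨⟨_, hs', hsu⟩, _, ht', htu⟩
    obtain ⟨s, hs, rfl⟩ := mem_image.1 hs'
    obtain ⟨t, ht, rfl⟩ := mem_image.1 ht'
    have hS := hD.2.1 i hs
    obtain ⟨z, ⟨s₀, hs₀, hs₀z⟩, hzu⟩ := hb.mem_of_walkWithin hD.1.isAcyclic
      (hD.walkWithin_of_reflTransGen (reflTransGen_reachLink_of_reflTransGen_quotientBy
        hH hf hπ.injOn hS (hD.2.1 j ht) hsu htu) ⟨hS, hS, s, hsu, .refl, .refl⟩ hs ht)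
    exact ⟨f s₀, mem_image_of_mem f hs₀, (hπ.reflTransGen_quotientBy hH hπ' hs₀z).trans hzu⟩

theorem dagTreewidth_quotientBy_le (hH : H.Good) (hf : ContractMap H f)
    (hπ' : Set.InjOn π' (quotientBy H f).verts) (hπ : IsLiftOrder H f π' π) :
    dagTreewidth (quotientBy H f).verts (SkelArc (quotientBy H f) π' l) ≤
      dagTreewidth H.verts (SkelArc H π l) := by
  obtain ⟨n, T, β, hD, hβ⟩ := exists_isDTD_card_le_dagTreewidth H.verts (SkelArc H π l)
  exact Nat.sInf_le
    ⟨n, T, _, hπ.isDTD_quotientBy hH hf hπ' hD, fun i => card_image_le.trans (hβ i)⟩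

end IsLiftOrder

theorem card_filter_lt_lt_iff {α β : Type*} [LinearOrder β] {s : Finset α} {g : α → β}
    {u v : α} (hu : u ∈ s) : #{x ∈ s | g x < g u} < #{x ∈ s | g x < g v} ↔ g u < g v := by
  constructor
  · intro h
    by_contra! hvu
    refine h.not_ge (card_le_card fun x hx => ?_)
    simp only [mem_filter] at hx ⊢
    exact ⟨hx.1, hx.2.trans_le hvu⟩
  · intro h
    refine card_lt_card ((ssubset_iff_of_subset fun x hx => ?_).2 ⟨u, ?_, ?_⟩)
    · simp only [mem_filter] at hx ⊢
      exact ⟨hx.1, hx.2.trans h⟩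
    · exact mem_filter.2 ⟨hu, h⟩
    · simp

theorem SimpleGraph.Reachable.exists_adj_dist_lt {V : Type*} {G : SimpleGraph V} {u v : V}
    (h : G.Reachable u v) (hne : u ≠ v) : ∃ w, G.Adj w v ∧ G.dist u w < G.dist u v := by
  obtain ⟨p, hp⟩ := h.symm.exists_walk_length_eq_dist
  cases p with
  | nil => exact absurd rfl hne
  | @cons _ w _ hvw q =>
    refine ⟨w, hvw.symm, ?_⟩
    rw [G.dist_comm, G.dist_comm (u := u), ← hp]
    calc G.dist w u ≤ q.length := SimpleGraph.dist_le q
      _ < (SimpleGraph.Walk.cons hvw q).length := by simp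

section LiftOrder

variable {H : HGraph} {f π' : ℕ → ℕ}

/-- The distance in `blockGraph H f` from the entry vertices of the fibre of `v` to `v`
(`0` when the fibre has no entry vertex). -/
def blockDepth (H : HGraph) (f π' : ℕ → ℕ) (v : ℕ) : ℕ :=
  sInf ((fun p => (blockGraph H f).dist p v) '' entries H f π' (f v))

def liftKey (H : HGraph) (f π' : ℕ → ℕ) (v : ℕ) : Lex (ℕ × Lex (ℕ × ℕ)) :=
  toLex (π' (f v), toLex (blockDepth H f π' v, v))

def liftOrder (H : HGraph) (f π' : ℕ → ℕ) (v : ℕ) : ℕ :=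
  #{u ∈ H.verts | liftKey H f π' u < liftKey H f π' v}

theorem exists_liftKey_lt (hH : H.Good) (hf : ContractMap H f) {v : ℕ} (hv : v ∈ H.verts)
    (hent : (entries H f π' (f v)).Nonempty) :
    ∃ e ∈ H.edges, v ∈ e ∧ ∃ u ∈ e, liftKey H f π' u < liftKey H f π' v := by
  by_cases hve : v ∈ entries H f π' (f v)
  · obtain ⟨e, he, hve, -, x, hx, hlt⟩ := hve
    exact ⟨e, he, hve, x, hx, Prod.Lex.toLex_lt_toLex.2 (.inl hlt)⟩
  · obtain ⟨q, hq, hqv⟩ := Nat.sInf_mem (hent.image fun p => (blockGraph H f).dist p v)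
    have hne : q ≠ v := by
      rintro rfl
      exact hve hq
    obtain ⟨e, he, hqe, hfq, -⟩ := id hq
    obtain ⟨u, huv, hdist⟩ := (hf.reachable ((hH e he).1 hqe) hv hfq).exists_adj_dist_lt hne
    obtain ⟨-, hfu, e', he', hue, hve'⟩ := blockGraph_adj.1 huv
    have hdepth : blockDepth H f π' u < blockDepth H f π' v :=
      calc blockDepth H f π' u ≤ (blockGraph H f).dist q u := Nat.sInf_le ⟨q, hfu ▸ hq, rfl⟩
        _ < (blockGraph H f).dist q v := hdist
        _ = blockDepth H f π' v := hqv
    refine ⟨e', he', hve', u, hue, Prod.Lex.toLex_lt_toLex.2 (.inr ⟨by rw [hfu], ?_⟩)⟩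
    exact Prod.Lex.toLex_lt_toLex.2 (.inl hdepth)

theorem isLiftOrder_liftOrder (hH : H.Good) (hf : ContractMap H f) :
    IsLiftOrder H f π' (liftOrder H f π') := by
  have hkey : ∀ {u v}, u ∈ H.verts →
      (liftOrder H f π' u < liftOrder H f π' v ↔ liftKey H f π' u < liftKey H f π' v) :=
    card_filter_lt_lt_iff
  refine ⟨fun u hu v hv huv => ?_,
    fun u hu v _ h => (hkey hu).2 (Prod.Lex.toLex_lt_toLex.2 (.inl h)), fun v hv hent => ?_⟩
  · by_contra hne
    have hkey_ne : liftKey H f π' u ≠ liftKey H f π' v :=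
      fun h => hne (congrArg (fun k => (ofLex (ofLex k).2).2) h)
    rcases hkey_ne.lt_or_gt with h | h
    · exact ((hkey hu).2 h).ne huv
    · exact ((hkey hv).2 h).ne' huv
  · obtain ⟨e, he, hve, u, hu, hlt⟩ := exists_liftKey_lt hH hf hv hent
    exact ⟨e, he, hve, u, hu, (hkey ((hH e he).1 hu)).2 hlt⟩

end LiftOrder

theorem bddAbove_ldtw_set (H : HGraph) (l : ℕ∞) :
    BddAbove {w : ℕ | ∃ π : ℕ → ℕ, Set.InjOn π ↑H.verts ∧ w = ldtwOriented H π l} := by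
  refine ⟨#H.verts, ?_⟩
  rintro _ ⟨π, -, rfl⟩
  exact dagTreewidth_le_card _ _

theorem stmt2 (l : ℕ∞) (H H' : HGraph) (hH : H.Good)
    (hq : IsContractQuotient H H') : ldtw H' l ≤ ldtw H l := by
  obtain ⟨f, hf, rfl⟩ := hq
  refine csSup_le ⟨_, id, Set.injOn_id _, rfl⟩ ?_
  rintro _ ⟨π', hπ', rfl⟩
  have hπ := isLiftOrder_liftOrder (π' := π') hH hf
  exact (hπ.dagTreewidth_quotientBy_le hH hf hπ').trans
    (le_csSup (bddAbove_ldtw_set H l) ⟨_, hπ.injOn, rfl⟩)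

end
end

section
/- A directed acyclic graph H⃗ has DAG-treewidth τ(H⃗) = 1 if and only if the reachability hypergraph of H⃗ is α-acyclic. -/
/-!
A DAG-tree decomposition whose bags are pairwise distinct singletons `{s}` is literally a join
tree of the reachability hypergraph: a source `s` is determined by its hyperedge `Reach(s)`, and
`Reach(s₁) ∩ Reach(s₂) ⊆ Reach(s)` is the running-intersection condition. Conversely, a
decomposition of width 1 can be brought into this form by contracting tree edges. A source lying
in two bags lies in every bag between them, so if two bags coincide, one of them equals its
neighbour towards the other; an empty bag, or one equal to a neighbouring bag, can be merged into
that neighbour.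
-/

open scoped Classical

noncomputable section

namespace SimpleGraph

variable {α β : Type*} {G : SimpleGraph α} {f : α → β}

theorem Walk.exists_walk_map_support_subset {u v : α} (p : G.Walk u v) :
    ∃ q : (G.map f).Walk (f u) (f v), q.support ⊆ p.support.map f := by
  induction p with
  | nil => exact ⟨Walk.nil, by simp⟩
  | @cons u w v h p ih =>
    obtain ⟨q, hq⟩ := ih
    by_cases huw : f u = f w
    · refine ⟨q.copy huw.symm rfl, ?_⟩
      rw [Walk.support_copy, Walk.support_cons, List.map_cons]
      exact List.Subset.trans hq (List.subset_cons_self _ _)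
    · refine ⟨Walk.cons (map_adj_apply' h huw) q, ?_⟩
      rw [Walk.support_cons, Walk.support_cons, List.map_cons]
      exact List.cons_subset_cons _ hq

theorem Connected.map_of_surjective (hG : G.Connected) (hf : Function.Surjective f) :
    (G.map f).Connected := by
  have : Nonempty β := hG.nonempty.map f
  refine Connected.mk fun x y => ?_
  obtain ⟨u, rfl⟩ := hf x
  obtain ⟨v, rfl⟩ := hf y
  obtain ⟨p⟩ := hG.preconnected u v
  exact ⟨(p.exists_walk_map_support_subset (f := f)).choose⟩

theorem IsAcyclic.exists_mem_support_of_isPath_map (hG : (G.map f).IsAcyclic) {u v : α}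
    (p : G.Walk u v) {q : (G.map f).Walk (f u) (f v)} (hq : q.IsPath) {b : β}
    (hb : b ∈ q.support) : ∃ c ∈ p.support, f c = b := by
  obtain ⟨q', hq'⟩ := p.exists_walk_map_support_subset (f := f)
  have hqq' : q = q'.bypass :=
    congrArg Subtype.val ((hG.subsingleton_path _ _).elim ⟨q, hq⟩ ⟨q'.bypass, q'.bypass_isPath⟩)
  rw [hqq'] at hb
  exact List.mem_map.mp (hq' (q'.support_bypass_subset_support hb))

theorem IsTree.map_of_card_eq_add_one [Finite α] [Finite β] (hG : G.IsTree)
    (hf : Function.Surjective f) {i a : α} (hia : G.Adj i a) (hfia : f i = f a)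
    (hcard : Nat.card α = Nat.card β + 1) : (G.map f).IsTree := by
  have hconn := hG.connected.map_of_surjective hf
  refine isTree_iff_connected_and_card.mpr
    ⟨hconn, le_antisymm ?_ hconn.card_vert_le_card_edgeSet_add_one⟩
  have hsub : (G.map f).edgeSet ⊆ Sym2.map f '' (G.edgeSet \ {s(i, a)}) := by
    intro e he
    induction e using Sym2.ind with
    | _ x y =>
    obtain ⟨hxy, u, v, huv, rfl, rfl⟩ := he
    refine ⟨s(u, v), ⟨huv, ?_⟩, rfl⟩
    rintro h
    rcases Sym2.eq_iff.mp h with ⟨rfl, rfl⟩ | ⟨rfl, rfl⟩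
    exacts [hxy hfia, hxy hfia.symm]
  have hG_card := (isTree_iff_connected_and_card.mp hG).2
  simp only [Nat.card_coe_set_eq] at hG_card ⊢
  have := (Set.ncard_le_ncard hsub (Set.toFinite _)).trans (Set.ncard_image_le (Set.toFinite _))
  rw [Set.ncard_sdiff_singleton_of_mem (G.mem_edgeSet.mpr hia)] at this
  have hpos : 0 < G.edgeSet.ncard :=
    (Set.ncard_pos (Set.toFinite _)).mpr ⟨_, G.mem_edgeSet.mpr hia⟩
  omega

end SimpleGraph

section Reachability

variable {V : Finset ℕ} {Adj : ℕ → ℕ → Prop}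

theorem sourcesOf_nonempty (hV : V.Nonempty) (hacyc : ∀ v, ¬ Relation.TransGen Adj v v) :
    (sourcesOf V Adj).Nonempty := by
  have : IsStrictOrder ℕ (Relation.TransGen Adj) :=
    { irrefl := hacyc, trans := fun _ _ _ => Relation.TransGen.trans }
  obtain ⟨⟨v, hv⟩, -, hmin⟩ := (V.finite_toSet.wellFoundedOn (r := Relation.TransGen Adj)).has_min
    Set.univ ⟨⟨_, hV.choose_spec⟩, trivial⟩
  exact ⟨v, Finset.mem_filter.mpr ⟨hv, fun ⟨u, hu, huv⟩ => hmin ⟨u, hu⟩ trivial (.single huv)⟩⟩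

theorem mem_of_mem_sourcesOf {s : ℕ} (hs : s ∈ sourcesOf V Adj) : s ∈ V :=
  (Finset.mem_filter.mp hs).1

theorem reach_subset (hAdjV : ∀ u v, Adj u v → u ∈ V ∧ v ∈ V) {s : ℕ} (hs : s ∈ V) :
    Reach Adj s ⊆ V := by
  intro x hx
  induction hx with
  | refl => exact hs
  | tail _ h _ => exact (hAdjV _ _ h).2

theorem eq_of_mem_reach_of_mem_sourcesOf (hAdjV : ∀ u v, Adj u v → u ∈ V ∧ v ∈ V) {s t : ℕ}
    (hs : s ∈ sourcesOf V Adj) (h : s ∈ Reach Adj t) : t = s := by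
  rcases h.cases_tail with rfl | ⟨c, -, hc⟩
  · rfl
  · exact absurd ⟨c, (hAdjV c s hc).1, hc⟩ (Finset.mem_filter.mp hs).2

theorem mem_of_mem_sourcesOf_of_mem_reachSet (hAdjV : ∀ u v, Adj u v → u ∈ V ∧ v ∈ V)
    {s : ℕ} {A : Set ℕ} (hs : s ∈ sourcesOf V Adj) (h : s ∈ ReachSet Adj A) : s ∈ A := by
  obtain ⟨a, ha, has⟩ := h
  rwa [← eq_of_mem_reach_of_mem_sourcesOf hAdjV hs has]

@[simp]
theorem reachSet_singleton (s : ℕ) : ReachSet Adj {s} = Reach Adj s := by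
  ext
  simp [ReachSet, Reach]

theorem reachSet_mono {A B : Set ℕ} (h : A ⊆ B) : ReachSet Adj A ⊆ ReachSet Adj B :=
  fun _ ⟨a, ha, hx⟩ => ⟨a, h ha, hx⟩

variable (V Adj) in
def reachEdge (s : ℕ) : Finset ℕ := V.filter fun v => v ∈ Reach Adj s

theorem mem_reachEdge {s v : ℕ} : v ∈ reachEdge V Adj s ↔ v ∈ V ∧ v ∈ Reach Adj s :=
  Finset.mem_filter

theorem reachEdge_injOn (hAdjV : ∀ u v, Adj u v → u ∈ V ∧ v ∈ V) :
    Set.InjOn (reachEdge V Adj) (sourcesOf V Adj) := by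
  intro s hs t _ h
  have hst : s ∈ reachEdge V Adj t := h ▸ mem_reachEdge.mpr ⟨mem_of_mem_sourcesOf hs, .refl⟩
  exact (eq_of_mem_reach_of_mem_sourcesOf hAdjV hs (mem_reachEdge.mp hst).2).symm

theorem reachEdge_inter_subset_iff (hAdjV : ∀ u v, Adj u v → u ∈ V ∧ v ∈ V) {s t u : ℕ}
    (hs : s ∈ V) :
    reachEdge V Adj s ∩ reachEdge V Adj t ⊆ reachEdge V Adj u ↔
      Reach Adj s ∩ Reach Adj t ⊆ Reach Adj u := by
  constructor
  · intro h x ⟨hxs, hxt⟩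
    exact (mem_reachEdge.mp (h (Finset.mem_inter.mpr
      ⟨mem_reachEdge.mpr ⟨reach_subset hAdjV hs hxs, hxs⟩,
        mem_reachEdge.mpr ⟨reach_subset hAdjV hs hxs, hxt⟩⟩))).2
  · intro h x hx
    obtain ⟨hxs, hxt⟩ := Finset.mem_inter.mp hx
    exact mem_reachEdge.mpr ⟨(mem_reachEdge.mp hxs).1,
      h ⟨(mem_reachEdge.mp hxs).2, (mem_reachEdge.mp hxt).2⟩⟩

end Reachability

section DAGTreeDecomposition

open SimpleGraph

variable {V : Finset ℕ} {Adj : ℕ → ℕ → Prop} {n : ℕ} {T : SimpleGraph (Fin n)}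
  {β : Fin n → Finset ℕ}

theorem IsDTD.mem_of_onPath (hAdjV : ∀ u v, Adj u v → u ∈ V ∧ v ∈ V) (h : IsDTD V Adj T β)
    {i j c : Fin n} {s : ℕ} (hi : s ∈ β i) (hj : s ∈ β j) (hc : OnPath T i j c) : s ∈ β c :=
  mem_of_mem_sourcesOf_of_mem_reachSet hAdjV (h.2.1 i hi)
    (h.2.2.2 i j c hc ⟨⟨s, hi, .refl⟩, ⟨s, hj, .refl⟩⟩)

theorem IsDTD.isAlphaAcyclic_of_eq_singleton (hAdjV : ∀ u v, Adj u v → u ∈ V ∧ v ∈ V)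
    (h : IsDTD V Adj T β) {σ : Fin n → ℕ} (hσ : Function.Injective σ)
    (hβ : ∀ i, β i = {σ i}) : IsAlphaAcyclic (reachHypergraph V Adj) := by
  have hsrc : ∀ i, σ i ∈ sourcesOf V Adj := fun i => h.2.1 i (by simp [hβ i])
  refine ⟨n, T, fun i => reachEdge V Adj (σ i), h.1,
    fun i j hij => hσ (reachEdge_injOn hAdjV (hsrc i) (hsrc j) hij),
    fun i => Finset.mem_image_of_mem _ (hsrc i), fun e he => ?_, fun i j b hb => ?_⟩
  · obtain ⟨s, hs, rfl⟩ := Finset.mem_image.mp he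
    obtain ⟨i, hi⟩ := h.2.2.1 s hs
    rw [hβ i, Finset.mem_singleton] at hi
    exact ⟨i, by rw [hi]; rfl⟩
  · have := h.2.2.2 i j b hb
    simp only [hβ, Finset.coe_singleton, reachSet_singleton] at this
    exact (reachEdge_inter_subset_iff hAdjV (mem_of_mem_sourcesOf (hsrc i))).mpr this

theorem exists_isDTD_of_isAlphaAcyclic (hAdjV : ∀ u v, Adj u v → u ∈ V ∧ v ∈ V)
    (h : IsAlphaAcyclic (reachHypergraph V Adj)) :
    ∃ (n : ℕ) (T : SimpleGraph (Fin n)) (β : Fin n → Finset ℕ),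
      IsDTD V Adj T β ∧ ∀ i, (β i).card ≤ 1 := by
  obtain ⟨n, T, f, hT, -, hf, hsurj, hpath⟩ := h
  choose σ hσ hfσ using fun i => Finset.mem_image.mp (hf i)
  refine ⟨n, T, fun i => {σ i}, ⟨hT, fun i => by simpa using hσ i, fun s hs => ?_,
    fun i j b hb => ?_⟩, fun i => (Finset.card_singleton _).le⟩
  · obtain ⟨i, hi⟩ := hsurj _ (Finset.mem_image_of_mem _ hs)
    refine ⟨i, show s ∈ ({σ i} : Finset ℕ) from ?_⟩
    rw [reachEdge_injOn hAdjV (hσ i) hs ((hfσ i).trans hi)]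
    exact Finset.mem_singleton_self s
  · have := hpath i j b hb
    rw [← hfσ i, ← hfσ j, ← hfσ b] at this
    simpa using (reachEdge_inter_subset_iff hAdjV (mem_of_mem_sourcesOf (hσ i))).mp this

theorem IsDTD.exists_eq_singleton_or_exists_adj (hAdjV : ∀ u v, Adj u v → u ∈ V ∧ v ∈ V)
    (hS : (sourcesOf V Adj).Nonempty) (h : IsDTD V Adj T β) (hw : ∀ i, (β i).card ≤ 1) :
    (∃ σ : Fin n → ℕ, Function.Injective σ ∧ ∀ i, β i = {σ i}) ∨
      ∃ i a, T.Adj i a ∧ (β i = ∅ ∨ β i = β a) := by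
  by_cases hne : ∀ i, (β i).Nonempty
  · choose σ hσ using fun i => Finset.card_eq_one.mp (le_antisymm (hw i) (hne i).card_pos)
    by_cases hinj : Function.Injective σ
    · exact .inl ⟨σ, hinj, hσ⟩
    obtain ⟨i, j, hij, hne⟩ := Function.not_injective_iff.mp hinj
    obtain ⟨p⟩ := h.1.connected.preconnected i j
    have hc : OnPath T i j p.bypass.snd :=
      ⟨p.bypass, p.bypass_isPath, p.bypass.getVert_mem_support 1⟩
    have hσc := h.mem_of_onPath hAdjV (s := σ i) (by simp [hσ i]) (by simp [hσ j, hij]) hc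
    rw [hσ, Finset.mem_singleton] at hσc
    exact .inr ⟨i, _, p.bypass.adj_snd (Walk.not_nil_of_ne hne), .inr (by rw [hσ, hσ, hσc])⟩
  · simp only [not_forall, Finset.not_nonempty_iff_eq_empty] at hne
    obtain ⟨i, hi⟩ := hne
    obtain ⟨s, hs⟩ := hS
    obtain ⟨k, hk⟩ := h.2.2.1 s hs
    have hik : i ≠ k := by
      rintro rfl
      exact Finset.notMem_empty s (hi ▸ hk)
    obtain ⟨p⟩ := h.1.connected.preconnected i k
    exact .inr ⟨i, p.snd, p.adj_snd (Walk.not_nil_of_ne hik), .inl hi⟩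

theorem IsDTD.map (h : IsDTD V Adj T β) {m : ℕ} {ρ : Fin n → Fin m} {ι : Fin m → Fin n}
    (hρι : Function.LeftInverse ρ ι) (hT : (T.map ρ).IsTree) (hβ : ∀ v, β v ⊆ β (ι (ρ v))) :
    IsDTD V Adj (T.map ρ) (β ∘ ι) := by
  obtain ⟨hT₀, hsub, hcover, hpath⟩ := h
  refine ⟨hT, fun z => hsub (ι z), fun s hs => ?_, ?_⟩
  · obtain ⟨k, hk⟩ := hcover s hs
    exact ⟨ρ k, hβ k hk⟩
  · rintro x y b ⟨q, hq, hb⟩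
    obtain ⟨p⟩ := hT₀.connected.preconnected (ι x) (ι y)
    obtain ⟨c, hc, rfl⟩ := hT.isAcyclic.exists_mem_support_of_isPath_map p.bypass
      (q := q.copy (hρι x).symm (hρι y).symm) (by simpa) (by simpa)
    exact (hpath _ _ c ⟨p.bypass, p.bypass_isPath, hc⟩).trans
      (reachSet_mono (by exact_mod_cast hβ c))

theorem IsDTD.contract {T : SimpleGraph (Fin (n + 1))} {β : Fin (n + 1) → Finset ℕ}
    (h : IsDTD V Adj T β) {i a : Fin (n + 1)} (hia : T.Adj i a) (hβ : β i = ∅ ∨ β i = β a) :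
    ∃ T' : SimpleGraph (Fin n), IsDTD V Adj T' (β ∘ i.succAbove) := by
  have hρ : ∀ v, ∃ z, i.succAbove z = Function.update id i a v := fun v =>
    Fin.exists_succAbove_eq (by by_cases hv : v = i <;> simp [hv, hia.ne'])
  choose ρ hρ using hρ
  have hρι : Function.LeftInverse ρ i.succAbove := fun z => Fin.succAbove_right_injective
    (by rw [hρ, Function.update_of_ne (Fin.succAbove_ne i z), id])
  have hρia : ρ i = ρ a := Fin.succAbove_right_injective (p := i) (by
    rw [hρ, hρ, Function.update_self, Function.update_of_ne hia.ne', id])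
  refine ⟨_, h.map hρι (h.1.map_of_card_eq_add_one hρι.surjective hia hρia (by simp))
    fun v => ?_⟩
  rw [hρ]
  by_cases hv : v = i
  · subst hv
    rcases hβ with hβ | hβ <;> simp [hβ]
  · simp [Function.update_of_ne hv]

theorem isAlphaAcyclic_of_isDTD (hAdjV : ∀ u v, Adj u v → u ∈ V ∧ v ∈ V)
    (hS : (sourcesOf V Adj).Nonempty) :
    ∀ {n : ℕ} {T : SimpleGraph (Fin n)} {β : Fin n → Finset ℕ},
      IsDTD V Adj T β → (∀ i, (β i).card ≤ 1) → IsAlphaAcyclic (reachHypergraph V Adj)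
  | 0, _, _, h, _ => h.1.connected.nonempty.elim Fin.elim0
  | n + 1, _, _, h, hw => by
    rcases h.exists_eq_singleton_or_exists_adj hAdjV hS hw with ⟨σ, hσ, hβ⟩ | ⟨i, a, hia, hβ⟩
    · exact h.isAlphaAcyclic_of_eq_singleton hAdjV hσ hβ
    · obtain ⟨T', hT'⟩ := h.contract hia hβ
      exact isAlphaAcyclic_of_isDTD hAdjV hS hT' fun z => hw _

theorem dagTreewidth_eq_one_iff (hS : (sourcesOf V Adj).Nonempty) :
    dagTreewidth V Adj = 1 ↔ ∃ (n : ℕ) (T : SimpleGraph (Fin n)) (β : Fin n → Finset ℕ),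
      IsDTD V Adj T β ∧ ∀ i, (β i).card ≤ 1 := by
  refine (Nat.sInf_upward_closed_eq_succ_iff ?_ 0).trans (and_iff_left ?_)
  · rintro w₁ w₂ hw ⟨n, T, β, h, hβ⟩
    exact ⟨n, T, β, h, fun i => (hβ i).trans hw⟩
  · rintro ⟨n, T, β, h, hβ⟩
    obtain ⟨s, hs⟩ := hS
    obtain ⟨k, hk⟩ := h.2.2.1 s hs
    exact (Finset.card_pos.mpr ⟨s, hk⟩).ne' (Nat.le_zero.mp (hβ k))

end DAGTreeDecomposition

theorem stmt10 (V : Finset ℕ) (Adj : ℕ → ℕ → Prop)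
    (hV : V.Nonempty) (hAdjV : ∀ u v, Adj u v → u ∈ V ∧ v ∈ V)
    (hacyc : ∀ v, ¬ Relation.TransGen Adj v v) :
    dagTreewidth V Adj = 1 ↔ IsAlphaAcyclic (reachHypergraph V Adj) := by
  have hS := sourcesOf_nonempty hV hacyc
  rw [dagTreewidth_eq_one_iff hS]
  exact ⟨fun ⟨_, _, _, h, hw⟩ => isAlphaAcyclic_of_isDTD hAdjV hS h hw,
    exists_isDTD_of_isAlphaAcyclic hAdjV⟩

end
end

section
/- A hypergraph H is 𝓗_∞ ITS free if and only if LICL(H^c) < 6, where H^c is the clique completion of H and LICL denotes the length of a longest induced cycle. -/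
open scoped Classical

noncomputable section

/-!
An induced cycle `x 0, …, x (n - 1)` of length `n ≥ 6` in the clique completion, trimmed to its
own vertex set, is an obstruction with core `{x 0, x 2, x 4}`: deleting the core leaves the three
arcs `{x 1}`, `{x 3}` and `{x 5, …, x (n - 1)}`, and every core vertex is covered by the
hyperedges of the two arcs next to it but misses the opposite one.

Conversely, pick three vertices `c 0, c 1, c 2` of the core of an obstruction and let `A i` be the
component attached to `c i`. The `c i` are pairwise non-adjacent, the `A i` are connected and
pairwise anticomplete, and `c j` has a neighbour in `A i` exactly when `j ≠ i`. Shortest paths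
`c 1 → c 2` through `A 0`, `c 2 → c 0` through `A 1` and `c 0 → c 1` through `A 2` are induced,
have length at least `2` each, and together form an induced cycle of length at least `6`.
-/

open Relation

def CycleAdj (n p q : ℕ) : Prop :=
  q = p + 1 ∨ p = q + 1 ∨ (p = 0 ∧ q = n - 1) ∨ (q = 0 ∧ p = n - 1)

lemma ZMod.natCast_eq_natCast_add_one_iff {n p q : ℕ} (hp : p < n) (hq : q < n) :
    (q : ZMod n) = p + 1 ↔ q = p + 1 ∨ (q = 0 ∧ p = n - 1) := by
  rw [← Nat.cast_add_one, ZMod.natCast_eq_natCast_iff', Nat.mod_eq_of_lt hq]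
  rcases Nat.lt_or_ge (p + 1) n with h | h
  · rw [Nat.mod_eq_of_lt h]; omega
  · rw [show p + 1 = n by omega, Nat.mod_self]; omega

lemma hasInducedCycle_iff {G : SimpleGraph ℕ} {n : ℕ} [NeZero n] :
    HasInducedCycle G n ↔ ∃ x : ℕ → ℕ, Set.InjOn x (Set.Iio n) ∧
      ∀ p < n, ∀ q < n, (G.Adj (x p) (x q) ↔ CycleAdj n p q) := by
  constructor
  · rintro ⟨f, hinj, hadj⟩
    refine ⟨fun p => f p, fun p hp q hq hpq => ?_, fun p hp q hq => ?_⟩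
    · have := congrArg ZMod.val (hinj hpq)
      rwa [ZMod.val_natCast_of_lt hp, ZMod.val_natCast_of_lt hq] at this
    · rw [hadj, ZMod.natCast_eq_natCast_add_one_iff hp hq,
        ZMod.natCast_eq_natCast_add_one_iff hq hp, CycleAdj]
      omega
  · rintro ⟨x, hinj, hadj⟩
    refine ⟨fun i => x i.val, fun i j hij => ZMod.val_injective n
      (hinj (Set.mem_Iio.2 i.val_lt) (Set.mem_Iio.2 j.val_lt) hij), fun i j => ?_⟩
    rw [hadj _ i.val_lt _ j.val_lt, ← ZMod.natCast_zmod_val i, ← ZMod.natCast_zmod_val j,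
      ZMod.natCast_eq_natCast_add_one_iff i.val_lt j.val_lt,
      ZMod.natCast_eq_natCast_add_one_iff j.val_lt i.val_lt, ZMod.val_natCast_of_lt i.val_lt,
      ZMod.val_natCast_of_lt j.val_lt, CycleAdj]
    omega

namespace SimpleGraph

variable {G : SimpleGraph ℕ}

structure IsInducedPath (G : SimpleGraph ℕ) (q : ℕ → ℕ) (m : ℕ) : Prop where
  injOn : Set.InjOn q (Set.Iic m)
  adj_iff : ∀ i ≤ m, ∀ j ≤ m, (G.Adj (q i) (q j) ↔ j = i + 1 ∨ i = j + 1)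

namespace IsInducedPath

variable {q r P Q X : ℕ → ℕ} {m k L : ℕ}

lemma eq_iff (h : IsInducedPath G q m) {i j : ℕ} (hi : i ≤ m) (hj : j ≤ m) :
    q i = q j ↔ i = j :=
  ⟨fun hij => h.injOn (Set.mem_Iic.2 hi) (Set.mem_Iic.2 hj) hij, congrArg q⟩

lemma mono (h : IsInducedPath G q m) (hk : k ≤ m) : IsInducedPath G q k :=
  ⟨h.injOn.mono (Set.Iic_subset_Iic.2 hk), fun i hi j hj => h.adj_iff i (by omega) j (by omega)⟩

lemma tail (h : IsInducedPath G q m) : IsInducedPath G (fun i => q (i + 1)) (m - 1) := by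
  rcases Nat.eq_zero_or_pos m with rfl | hm
  · exact ⟨fun i hi j hj _ => by simp_all, fun i hi j hj => by simp_all⟩
  refine ⟨fun i hi j hj hij => ?_, fun i hi j hj => ?_⟩
  · simp only [Set.mem_Iic] at hi hj
    have := (h.eq_iff (i := i + 1) (j := j + 1) (by omega) (by omega)).1 hij
    omega
  · rw [h.adj_iff _ (by omega) _ (by omega)]
    omega

lemma append (hq : IsInducedPath G q m) (hr : IsInducedPath G r k) (hqr : q m = r 0)
    (hcross : ∀ i < m, ∀ j, 0 < j → j ≤ k → q i ≠ r j ∧ ¬ G.Adj (q i) (r j)) :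
    IsInducedPath G (fun i => if i ≤ m then q i else r (i - m)) (m + k) := by
  set X : ℕ → ℕ := fun i => if i ≤ m then q i else r (i - m)
  have across : ∀ i ≤ m, ∀ j, m < j → j ≤ m + k →
      X i ≠ X j ∧ (G.Adj (X i) (X j) ↔ j = i + 1) := by
    intro i hi j hj hjk
    simp only [X, if_pos hi, if_neg (show ¬ j ≤ m by omega)]
    rcases hi.lt_or_eq with hi | rfl
    · exact ⟨(hcross i hi _ (by omega) (by omega)).1,
        iff_of_false (hcross i hi _ (by omega) (by omega)).2 (by omega)⟩
    · rw [hqr, Ne, hr.eq_iff (i := 0) (j := j - i) (by omega) (by omega),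
        hr.adj_iff 0 (by omega) (j - i) (by omega)]
      omega
  refine ⟨fun i hi j hj hij => ?_, fun i hi j hj => ?_⟩
  · simp only [Set.mem_Iic] at hi hj
    by_cases him : i ≤ m <;> by_cases hjm : j ≤ m
    · simpa [X, him, hjm, hq.eq_iff him hjm] using hij
    · exact absurd hij (across i him j (by omega) hj).1
    · exact absurd hij.symm (across j hjm i (by omega) hi).1
    · simp only [X, if_neg him, if_neg hjm] at hij
      have := (hr.eq_iff (i := i - m) (j := j - m) (by omega) (by omega)).1 hij
      omega
  · by_cases him : i ≤ m <;> by_cases hjm : j ≤ m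
    · simpa [X, him, hjm] using hq.adj_iff i him j hjm
    · rw [(across i him j (by omega) hj).2]; omega
    · rw [G.adj_comm, (across j hjm i (by omega) hi).2]; omega
    · simp only [X, if_neg him, if_neg hjm, hr.adj_iff (i - m) (by omega) (j - m) (by omega)]
      omega

lemma hasInducedCycle_add_two (hX : IsInducedPath G X L) {v : ℕ} (hv : ∀ i ≤ L, v ≠ X i)
    (hadj : ∀ i ≤ L, G.Adj v (X i) ↔ i = 0 ∨ i = L) : HasInducedCycle G (L + 2) := by
  refine hasInducedCycle_iff.2 ⟨fun p => if p = 0 then v else X (p - 1),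
    fun p hp q hq hpq => ?_, fun p hp q hq => ?_⟩
  · simp only [Set.mem_Iio] at hp hq
    by_cases hp0 : p = 0 <;> by_cases hq0 : q = 0
    · omega
    · simp only [if_pos hp0, if_neg hq0] at hpq
      exact absurd hpq (hv _ (by omega))
    · simp only [if_neg hp0, if_pos hq0] at hpq
      exact absurd hpq.symm (hv _ (by omega))
    · simp only [if_neg hp0, if_neg hq0] at hpq
      have := (hX.eq_iff (i := p - 1) (j := q - 1) (by omega) (by omega)).1 hpq
      omega
  · by_cases hp0 : p = 0 <;> by_cases hq0 : q = 0
    · simp only [if_pos hp0, if_pos hq0, SimpleGraph.irrefl, false_iff, CycleAdj]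
      omega
    · simp only [if_pos hp0, if_neg hq0, hadj (q - 1) (by omega), CycleAdj]
      omega
    · simp only [if_neg hp0, if_pos hq0, G.adj_comm (X _), hadj (p - 1) (by omega), CycleAdj]
      omega
    · simp only [if_neg hp0, if_neg hq0, hX.adj_iff (p - 1) (by omega) (q - 1) (by omega),
        CycleAdj]
      omega

/-- The cycle is `P 0` followed by the path `P 1, …, P m = Q 0, …, Q (k - 1)`. -/
lemma hasInducedCycle_add (hP : IsInducedPath G P m) (hQ : IsInducedPath G Q k)
    (hm : 2 ≤ m) (hk : 2 ≤ k) (hPQ : P m = Q 0) (hQP : Q k = P 0)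
    (hcross : ∀ i, 0 < i → i < m → ∀ j, 0 < j → j < k → P i ≠ Q j ∧ ¬ G.Adj (P i) (Q j)) :
    HasInducedCycle G (m + k) := by
  have hX := hP.tail.append (hQ.mono (k := k - 1) (by omega))
    (by simpa [show m - 1 + 1 = m by omega] using hPQ)
    (fun i hi j hj hjk => hcross (i + 1) (by omega) (by omega) j hj (by omega))
  rw [show m + k = m - 1 + (k - 1) + 2 by omega]
  refine hX.hasInducedCycle_add_two (v := P 0) (fun i hi => ?_) (fun i hi => ?_)
  · by_cases him : i ≤ m - 1
    · simp only [if_pos him, Ne, hP.eq_iff (i := 0) (j := i + 1) (by omega) (by omega)]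
      omega
    · simp only [if_neg him, Ne, ← hQP, hQ.eq_iff (i := k) (j := i - (m - 1)) le_rfl (by omega)]
      omega
  · by_cases him : i ≤ m - 1
    · simp only [if_pos him, hP.adj_iff 0 (by omega) (i + 1) (by omega)]
      omega
    · simp only [if_neg him, ← hQP, hQ.adj_iff k le_rfl (i - (m - 1)) (by omega)]
      omega

end IsInducedPath

/-- A shortest walk inside `U` is an induced path. -/
lemma exists_isInducedPath {U : Set ℕ} {b c : ℕ} (hb : b ∈ U)
    (h : ReflTransGen (fun x y => x ∈ U ∧ y ∈ U ∧ G.Adj x y) b c) :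
    ∃ m q, q 0 = b ∧ q m = c ∧ (∀ i ≤ m, q i ∈ U) ∧ IsInducedPath G q m := by
  set G' := ((⊤ : G.Subgraph).induce U).spanningCoe
  have hG' : ∀ x y, G'.Adj x y ↔ x ∈ U ∧ y ∈ U ∧ G.Adj x y := by simp [G']
  obtain ⟨p, hp⟩ := ((reachable_iff_reflTransGen b c).2
    (ReflTransGen.mono (fun x y hxy => (hG' x y).2 hxy) _ _ h)).exists_walk_length_eq_dist
  have hU : ∀ i ≤ p.length, p.getVert i ∈ U := by
    rintro (_ | i) hi
    · simpa using hb
    · exact ((hG' _ _).1 (p.adj_getVert_succ (i := i) (by omega))).2.1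
  have chordless : ∀ i j, i + 1 < j → j ≤ p.length → ¬ G'.Adj (p.getVert i) (p.getVert j) := by
    intro i j hij hj hadj
    have := dist_le (((p.take i).concat hadj).append (p.drop j))
    simp only [Walk.length_append, Walk.length_concat, Walk.take_length, Walk.drop_length] at this
    omega
  refine ⟨p.length, p.getVert, p.getVert_zero, p.getVert_length, hU,
    (p.isPath_of_length_eq_dist hp).getVert_injOn, fun i hi j hj => ⟨fun hij => ?_, ?_⟩⟩
  · have hij' := (hG' _ _).2 ⟨hU i hi, hU j hj, hij⟩
    rcases Nat.lt_trichotomy i j with h | rfl | h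
    · exact by_contra fun hne => chordless i j (by omega) hj hij'
    · exact absurd hij (G.loopless.irrefl _)
    · exact by_contra fun hne => chordless j i (by omega) hi hij'.symm
  · rintro (rfl | rfl)
    · exact ((hG' _ _).1 (p.adj_getVert_succ (by omega))).2.2
    · exact ((hG' _ _).1 (p.adj_getVert_succ (by omega))).2.2.symm

lemma exists_isInducedPath_through {A : Set ℕ} {b c : ℕ} (hbc : b ≠ c) (hadj : ¬ G.Adj b c)
    (hb : ∃ u ∈ A, G.Adj b u) (hc : ∃ u ∈ A, G.Adj c u)
    (hA : ∀ u ∈ A, ∀ v ∈ A, ReflTransGen (fun x y => x ∈ A ∧ y ∈ A ∧ G.Adj x y) u v) :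
    ∃ m q, 2 ≤ m ∧ q 0 = b ∧ q m = c ∧ (∀ i, 0 < i → i < m → q i ∈ A) ∧
      IsInducedPath G q m := by
  obtain ⟨u, hu, hbu⟩ := hb
  obtain ⟨v, hv, hcv⟩ := hc
  set U : Set ℕ := insert b (insert c A)
  have hAU : A ⊆ U := fun x hx => Or.inr (Or.inr hx)
  have hwalk : ReflTransGen (fun x y => x ∈ U ∧ y ∈ U ∧ G.Adj x y) b c :=
    .head ⟨Or.inl rfl, hAU hu, hbu⟩ <| ReflTransGen.tail
      (ReflTransGen.mono (fun x y h => ⟨hAU h.1, hAU h.2.1, h.2.2⟩) _ _ (hA u hu v hv))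
      ⟨hAU hv, Or.inr (Or.inl rfl), hcv.symm⟩
  obtain ⟨m, q, hq0, hqm, hqU, hq⟩ := exists_isInducedPath (Or.inl rfl) hwalk
  have hm : 2 ≤ m := by
    rcases Nat.lt_or_ge m 2 with hm | hm
    · interval_cases m
      · exact absurd (hq0.symm.trans hqm) hbc
      · exact absurd ((hq.adj_iff 0 (by omega) 1 le_rfl).2 (Or.inl rfl)) (hq0 ▸ hqm ▸ hadj)
    · exact hm
  refine ⟨m, q, hm, hq0, hqm, fun i hi0 him => ?_, hq⟩
  rcases hqU i him.le with h | h | h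
  · exact absurd (hq0 ▸ h) (mt (hq.eq_iff (i := i) (j := 0) him.le (by omega)).1 (by omega))
  · exact absurd (hqm ▸ h) (mt (hq.eq_iff (i := i) (j := m) him.le le_rfl).1 (by omega))
  · exact h

theorem exists_hasInducedCycle_of_three_sets (c : Fin 3 → ℕ) (A : Fin 3 → Set ℕ)
    (hc : ∀ i j, i ≠ j → c i ≠ c j ∧ ¬ G.Adj (c i) (c j))
    (hcA : ∀ i j, c i ∉ A j)
    (hA : ∀ i j, i ≠ j → ∀ u ∈ A i, ∀ v ∈ A j, u ≠ v ∧ ¬ G.Adj u v)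
    (hfar : ∀ i, ∀ u ∈ A i, ¬ G.Adj (c i) u)
    (hnear : ∀ i j, i ≠ j → ∃ u ∈ A i, G.Adj (c j) u)
    (hconn : ∀ i, ∀ u ∈ A i, ∀ v ∈ A i,
      ReflTransGen (fun x y => x ∈ A i ∧ y ∈ A i ∧ G.Adj x y) u v) :
    ∃ n, 6 ≤ n ∧ HasInducedCycle G n := by
  have path : ∀ i j k, i ≠ j → i ≠ k → j ≠ k → ∃ m q, 2 ≤ m ∧ q 0 = c j ∧ q m = c k ∧
      (∀ l, 0 < l → l < m → q l ∈ A i) ∧ IsInducedPath G q m := fun i j k hij hik hjk =>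
    exists_isInducedPath_through (hc j k hjk).1 (hc j k hjk).2
      (hnear i j hij) (hnear i k hik) (hconn i)
  obtain ⟨m, P, hm, hP0, hPm, hPA, hP⟩ := path 0 1 2 (by decide) (by decide) (by decide)
  obtain ⟨k₁, Q₁, hk₁, hQ₁0, hQ₁k, hQ₁A, hQ₁⟩ := path 1 2 0 (by decide) (by decide) (by decide)
  obtain ⟨k₂, Q₂, hk₂, hQ₂0, hQ₂k, hQ₂A, hQ₂⟩ := path 2 0 1 (by decide) (by decide) (by decide)
  have hQ₁mem : ∀ i < k₁, Q₁ i = c 2 ∨ Q₁ i ∈ A 1 := fun i hi => by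
    rcases Nat.eq_zero_or_pos i with rfl | hi0
    · exact Or.inl hQ₁0
    · exact Or.inr (hQ₁A i hi0 hi)
  have hQ₂mem : ∀ j, 0 < j → j ≤ k₂ → Q₂ j = c 1 ∨ Q₂ j ∈ A 2 := fun j hj0 hj => by
    rcases hj.lt_or_eq with hj | rfl
    · exact Or.inr (hQ₂A j hj0 hj)
    · exact Or.inl hQ₂k
  set Q : ℕ → ℕ := fun j => if j ≤ k₁ then Q₁ j else Q₂ (j - k₁)
  have hQ : IsInducedPath G Q (k₁ + k₂) :=
    hQ₁.append hQ₂ (hQ₁k.trans hQ₂0.symm) fun i hi j hj0 hj => by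
      rcases hQ₁mem i hi with h₁ | h₁ <;> rcases hQ₂mem j hj0 hj with h₂ | h₂
      · rw [h₁, h₂]; exact hc 2 1 (by decide)
      · rw [h₁]; exact ⟨fun h => hcA 2 2 (h ▸ h₂), hfar 2 _ h₂⟩
      · rw [h₂]; exact ⟨fun h => hcA 1 1 (h ▸ h₁), fun h => hfar 1 _ h₁ h.symm⟩
      · exact hA 1 2 (by decide) _ h₁ _ h₂
  have hQA : ∀ j, 0 < j → j < k₁ + k₂ → ∀ u ∈ A 0, u ≠ Q j ∧ ¬ G.Adj u (Q j) := by
    intro j hj0 hj u hu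
    by_cases hjk : j ≤ k₁
    · simp only [Q, if_pos hjk]
      rcases hjk.lt_or_eq with hjk | rfl
      · exact hA 0 1 (by decide) u hu _ (hQ₁A j hj0 hjk)
      · rw [hQ₁k]; exact ⟨fun h => hcA 0 0 (h ▸ hu), fun h => hfar 0 u hu h.symm⟩
    · simp only [Q, if_neg hjk]
      exact hA 0 2 (by decide) u hu _ (hQ₂A _ (by omega) (by omega))
  refine ⟨m + (k₁ + k₂), by omega, hP.hasInducedCycle_add hQ hm (by omega) ?_ ?_
    fun i hi0 him j hj0 hj => hQA j hj0 hj _ (hPA i hi0 him)⟩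
  · simp [Q, hPm, hQ₁0]
  · simp [Q, show ¬ k₁ + k₂ ≤ k₁ by omega, hQ₂k, hP0]

end SimpleGraph

namespace HGraph

variable {G : HGraph} {S C D D' e : Finset ℕ} {c u v : ℕ}

lemma adj_comm : G.Adj u v ↔ G.Adj v u :=
  ⟨fun ⟨e, he, hu, hv⟩ => ⟨e, he, hv, hu⟩, fun ⟨e, he, hv, hu⟩ => ⟨e, he, hu, hv⟩⟩

lemma Good.mem_verts_of_adj (hG : G.Good) (h : G.Adj u v) : v ∈ G.verts :=
  let ⟨e, he, _, hv⟩ := h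
  (hG e he).1 hv

lemma mem_trim_top_edges :
    e ∈ (G.trim S ⊤).edges ↔ ∃ e₀ ∈ G.edges, (e₀ ∩ S).Nonempty ∧ e₀ ∩ S = e := by
  simp [trim, and_assoc]

lemma trim_verts {l : ℕ∞} : (G.trim S l).verts = G.verts ∩ S := rfl

lemma Good.trim (hG : G.Good) (S : Finset ℕ) (l : ℕ∞) : (G.trim S l).Good := by
  intro e he
  obtain ⟨e₀, he₀, rfl⟩ := Finset.mem_image.1 he
  exact ⟨Finset.inter_subset_inter_right (hG e₀ (Finset.mem_filter.1 he₀).1).1,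
    (Finset.mem_filter.1 he₀).2.2⟩

lemma adj_trim_top : (G.trim S ⊤).Adj u v ↔ u ∈ S ∧ v ∈ S ∧ G.Adj u v := by
  constructor
  · rintro ⟨e, he, hu, hv⟩
    obtain ⟨e₀, he₀, -, rfl⟩ := mem_trim_top_edges.1 he
    simp only [Finset.mem_inter] at hu hv
    exact ⟨hu.2, hv.2, e₀, he₀, hu.1, hv.1⟩
  · rintro ⟨huS, hvS, e₀, he₀, hu, hv⟩
    exact ⟨e₀ ∩ S, mem_trim_top_edges.2 ⟨e₀, he₀, ⟨u, Finset.mem_inter.2 ⟨hu, huS⟩⟩, rfl⟩,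
      Finset.mem_inter.2 ⟨hu, huS⟩, Finset.mem_inter.2 ⟨hv, hvS⟩⟩

instance : Std.Symm G.Adj := ⟨fun _ _ => adj_comm.1⟩

lemma isComponent_filter (hv : v ∈ G.verts) :
    G.IsComponent (G.verts.filter (ReflTransGen G.Adj v)) :=
  ⟨v, hv, rfl⟩

namespace IsComponent

lemma subset_verts (hD : G.IsComponent D) : D ⊆ G.verts := by
  obtain ⟨v, -, rfl⟩ := hD
  exact Finset.filter_subset _ _

lemma eq_filter_of_mem (hD : G.IsComponent D) (hu : u ∈ D) :
    D = G.verts.filter (ReflTransGen G.Adj u) := by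
  obtain ⟨v, -, rfl⟩ := hD
  have hvu := (Finset.mem_filter.1 hu).2
  ext w
  simp only [Finset.mem_filter, and_congr_right_iff]
  exact fun _ => ⟨(Std.Symm.symm _ _ hvu).trans, hvu.trans⟩

lemma eq_of_mem (hD : G.IsComponent D) (hD' : G.IsComponent D') (hu : u ∈ D) (hu' : u ∈ D') :
    D = D' :=
  (hD.eq_filter_of_mem hu).trans (hD'.eq_filter_of_mem hu').symm

lemma mem_of_adj (hG : G.Good) (hD : G.IsComponent D) (hu : u ∈ D) (h : G.Adj u v) : v ∈ D := by
  rw [hD.eq_filter_of_mem hu]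
  exact Finset.mem_filter.2 ⟨hG.mem_verts_of_adj h, .single h⟩

lemma not_adj_of_ne (hG : G.Good) (hD : G.IsComponent D) (hD' : G.IsComponent D') (hne : D ≠ D')
    (hu : u ∈ D) (hv : v ∈ D') : u ≠ v ∧ ¬ (cliqueCompletion G).Adj u v :=
  ⟨fun huv => hne (hD.eq_of_mem hD' hu (huv ▸ hv)),
    fun h => hne (hD.eq_of_mem hD' (hD.mem_of_adj hG hu h.2) hv)⟩

lemma reflTransGen (hG : G.Good) (hD : G.IsComponent D) (hu : u ∈ D) (hv : v ∈ D) :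
    ReflTransGen (fun x y => x ∈ D ∧ y ∈ D ∧ (cliqueCompletion G).Adj x y) u v := by
  rw [hD.eq_filter_of_mem hu] at hv ⊢
  obtain ⟨-, huv⟩ := Finset.mem_filter.1 hv
  induction huv with
  | refl => exact .refl
  | @tail x y hux hxy ih =>
    have hx : x ∈ G.verts.filter (ReflTransGen G.Adj u) :=
      Finset.mem_filter.2 ⟨hG.mem_verts_of_adj (adj_comm.1 hxy), hux⟩
    have hy : y ∈ G.verts.filter (ReflTransGen G.Adj u) :=
      Finset.mem_filter.2 ⟨hG.mem_verts_of_adj hxy, hux.tail hxy⟩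
    by_cases hxy' : x = y
    · exact hxy' ▸ ih hx
    · exact (ih hx).tail ⟨hx, hy, hxy', hxy⟩

end IsComponent

lemma cliqueCompletion_adj :
    (cliqueCompletion G).Adj u v ↔ u ≠ v ∧ G.Adj u v :=
  Iff.rfl

lemma cliqueCompletion_trim_top_adj (hu : u ∈ S) (hv : v ∈ S) :
    (cliqueCompletion (G.trim S ⊤)).Adj u v ↔ (cliqueCompletion G).Adj u v := by
  simp [cliqueCompletion_adj, adj_trim_top, hu, hv]

lemma _root_.HasInducedCycle.of_trim_top {n : ℕ}
    (h : HasInducedCycle (cliqueCompletion (G.trim S ⊤)) n) :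
    HasInducedCycle (cliqueCompletion G) n := by
  obtain ⟨f, hinj, hadj⟩ := h
  have hS : ∀ i, f i ∈ S := fun i =>
    (adj_trim_top.1 ((hadj i (i + 1)).2 (Or.inl rfl)).2).1
  exact ⟨f, hinj, fun i j => (cliqueCompletion_trim_top_adj (hS i) (hS j)).symm.trans (hadj i j)⟩

lemma trim_edges_card_le_one_iff :
    (∀ e ∈ (G.trim C ⊤).edges, e.card ≤ 1) ↔
      ∀ u ∈ C, ∀ v ∈ C, ¬ (cliqueCompletion G).Adj u v := by
  constructor
  · rintro h u hu v hv ⟨huv, e₀, he₀, heu, hev⟩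
    have hmem : e₀ ∩ C ∈ (G.trim C ⊤).edges :=
      mem_trim_top_edges.2 ⟨e₀, he₀, ⟨u, Finset.mem_inter.2 ⟨heu, hu⟩⟩, rfl⟩
    exact huv (Finset.card_le_one.1 (h _ hmem) u (Finset.mem_inter.2 ⟨heu, hu⟩)
      v (Finset.mem_inter.2 ⟨hev, hv⟩))
  · intro h e he
    obtain ⟨e₀, he₀, -, rfl⟩ := mem_trim_top_edges.1 he
    refine Finset.card_le_one.2 fun u hu v hv => by_contra fun huv => ?_
    simp only [Finset.mem_inter] at hu hv
    exact h u hu.2 v hv.2 ⟨huv, e₀, he₀, hu.1, hv.1⟩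

lemma subset_union_of_mem_edges (hG : G.Good) (hD : (G.trim (G.verts \ C) ⊤).IsComponent D)
    (he : e ∈ G.edges) (hu : u ∈ e) (huD : u ∈ D) : e ⊆ C ∪ D := by
  intro z hz
  by_cases hzC : z ∈ C
  · exact Finset.mem_union_left _ hzC
  · have hzT : z ∈ G.verts \ C := Finset.mem_sdiff.2 ⟨(hG e he).1 hz, hzC⟩
    have huT : u ∈ G.verts \ C := (Finset.mem_inter.1 (hD.subset_verts huD)).2
    exact Finset.mem_union_right _
      (hD.mem_of_adj (hG.trim _ _) huD (adj_trim_top.2 ⟨huT, hzT, e, he, hu, hz⟩))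

lemma notMem_of_mem_obstructionEdges (hc : ∀ v ∈ C ∪ D, ¬ (cliqueCompletion G).Adj c v)
    (he : e ∈ obstructionEdges G C D) : c ∉ e := by
  intro hce
  obtain ⟨he, heCD, hcard⟩ := Finset.mem_filter.1 he
  obtain ⟨v, hv, hvc⟩ := Finset.exists_mem_ne hcard c
  exact hc v (heCD hv) ⟨hvc.symm, e, he, hce, hv⟩

lemma not_adj_of_forall_notMem (hG : G.Good) (hD : (G.trim (G.verts \ C) ⊤).IsComponent D)
    (hc : ∀ e ∈ obstructionEdges G C D, c ∉ e) (hu : u ∈ D) : ¬ (cliqueCompletion G).Adj c u := by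
  rintro ⟨hcu, e, he, hce, hue⟩
  refine hc e (Finset.mem_filter.2 ⟨he, subset_union_of_mem_edges hG hD he hue hu, ?_⟩) hce
  exact Finset.one_lt_card.2 ⟨c, hce, u, hue, hcu⟩

lemma exists_adj_of_mem_biUnion (hC : ∀ u ∈ C, ∀ v ∈ C, ¬ (cliqueCompletion G).Adj u v)
    (hc : c ∈ C) (h : c ∈ (obstructionEdges G C D).biUnion id) :
    ∃ u ∈ D, (cliqueCompletion G).Adj c u := by
  obtain ⟨e, he, hce⟩ := Finset.mem_biUnion.1 h
  obtain ⟨he, heCD, hcard⟩ := Finset.mem_filter.1 he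
  obtain ⟨u, hu, huc⟩ := Finset.exists_mem_ne hcard c
  have hadj : (cliqueCompletion G).Adj c u := ⟨huc.symm, e, he, hce, hu⟩
  rcases Finset.mem_union.1 (heCD hu) with huC | huD
  · exact absurd hadj (hC c hc u huC)
  · exact ⟨u, huD, hadj⟩

lemma pair_mem_obstructionEdges (he : {u, v} ∈ G.edges) (hu : u ∈ C) (hv : v ∈ D)
    (huv : u ≠ v) : {u, v} ∈ obstructionEdges G C D := by
  refine Finset.mem_filter.2 ⟨he, ?_, by simp [huv]⟩
  rw [Finset.insert_subset_iff, Finset.singleton_subset_iff]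
  exact ⟨Finset.mem_union_left _ hu, Finset.mem_union_right _ hv⟩

def cycleCore (x : ℕ → ℕ) : Finset ℕ := {x 0, x 2, x 4}

/-- The component of `x r` after deleting the core `{x 0, x 2, x 4}` from the cycle: for
`r = 1`, `3` and `5` these are `{x 1}`, `{x 3}` and `{x 5, …, x (n - 1)}`. -/
def arcComponent (K : HGraph) (x : ℕ → ℕ) (r : ℕ) : Finset ℕ :=
  (K.trim (K.verts \ cycleCore x) ⊤).verts.filter
    (ReflTransGen (K.trim (K.verts \ cycleCore x) ⊤).Adj (x r))

lemma mem_cycleCore {x : ℕ → ℕ} :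
    u ∈ cycleCore x ↔ ∃ p, (p = 0 ∨ p = 2 ∨ p = 4) ∧ x p = u := by
  simp only [cycleCore, Finset.mem_insert, Finset.mem_singleton]
  constructor
  · rintro (rfl | rfl | rfl) <;> simp
  · rintro ⟨p, (rfl | rfl | rfl), rfl⟩ <;> simp

structure IsLongCycle (K : HGraph) (x : ℕ → ℕ) (n : ℕ) : Prop where
  good : K.Good
  six_le : 6 ≤ n
  injOn : Set.InjOn x (Set.Iio n)
  verts_eq : K.verts = (Finset.range n).image x
  adj_iff : ∀ p < n, ∀ q < n, ((cliqueCompletion K).Adj (x p) (x q) ↔ CycleAdj n p q)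

namespace IsLongCycle

variable {K : HGraph} {x : ℕ → ℕ} {n p q r : ℕ}

lemma eq_iff (h : K.IsLongCycle x n) (hp : p < n) (hq : q < n) : x p = x q ↔ p = q :=
  ⟨fun hpq => h.injOn (Set.mem_Iio.2 hp) (Set.mem_Iio.2 hq) hpq, congrArg x⟩

lemma mem_verts (h : K.IsLongCycle x n) : u ∈ K.verts ↔ ∃ p < n, x p = u := by
  simp [h.verts_eq]

lemma eq_or_cycleAdj_of_adj (h : K.IsLongCycle x n) (hp : p < n) (hq : q < n)
    (hpq : K.Adj (x p) (x q)) : p = q ∨ CycleAdj n p q := by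
  by_cases hxpq : x p = x q
  · exact Or.inl ((h.eq_iff hp hq).1 hxpq)
  · exact Or.inr ((h.adj_iff p hp q hq).1 ⟨hxpq, hpq⟩)

/-- A hyperedge meets an induced cycle of length at least `4` in at most two consecutive
vertices. -/
lemma pair_mem_edges (h : K.IsLongCycle x n) (hp : p < n) (hq : q < n) (hpq : CycleAdj n p q) :
    {x p, x q} ∈ K.edges := by
  obtain ⟨-, e, he, hpe, hqe⟩ := (h.adj_iff p hp q hq).2 hpq
  convert he using 1
  refine (Finset.Subset.antisymm ?_ ?_).symm
  · intro z hz
    obtain ⟨r, hr, rfl⟩ := h.mem_verts.1 ((h.good e he).1 hz)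
    by_contra hrpq
    simp only [Finset.mem_insert, Finset.mem_singleton, not_or] at hrpq
    have hrp := (h.adj_iff r hr p hp).1 ⟨hrpq.1, e, he, hz, hpe⟩
    have hrq := (h.adj_iff r hr q hq).1 ⟨hrpq.2, e, he, hz, hqe⟩
    rw [h.eq_iff hr hp, h.eq_iff hr hq] at hrpq
    simp only [CycleAdj] at hpq hrp hrq
    have := h.six_le
    omega
  · rw [Finset.insert_subset_iff, Finset.singleton_subset_iff]
    exact ⟨hpe, hqe⟩

lemma mem_verts_sdiff_cycleCore (h : K.IsLongCycle x n) :
    u ∈ K.verts \ cycleCore x ↔ ∃ p < n, (p ≠ 0 ∧ p ≠ 2 ∧ p ≠ 4) ∧ x p = u := by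
  have := h.six_le
  rw [Finset.mem_sdiff, h.mem_verts, mem_cycleCore]
  constructor
  · rintro ⟨⟨p, hp, rfl⟩, hcore⟩
    refine ⟨p, hp, ?_, rfl⟩
    by_contra hp'
    exact hcore ⟨p, by omega, rfl⟩
  · rintro ⟨p, hp, hp', rfl⟩
    refine ⟨⟨p, hp, rfl⟩, ?_⟩
    rintro ⟨q, hq, hqp⟩
    rw [h.eq_iff (by omega) hp] at hqp
    omega

lemma reflTransGen_five (h : K.IsLongCycle x n) (hq : 5 ≤ q) (hqn : q < n) :
    ReflTransGen (K.trim (K.verts \ cycleCore x) ⊤).Adj (x 5) (x q) := by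
  induction q, hq using Nat.le_induction with
  | base => exact .refl
  | succ q hq ih =>
    refine (ih (by omega)).tail (adj_trim_top.2 ⟨?_, ?_, ?_⟩)
    · exact h.mem_verts_sdiff_cycleCore.2 ⟨q, by omega, by omega, rfl⟩
    · exact h.mem_verts_sdiff_cycleCore.2 ⟨q + 1, hqn, by omega, rfl⟩
    · exact ((h.adj_iff q (by omega) (q + 1) hqn).2 (Or.inl rfl)).2

/-- `min q 5` is `1`, `3` or `5` according to the arc of `x q`. -/
lemma mem_arcComponent (h : K.IsLongCycle x n) (hr : r < n) (hr' : r ≠ 0 ∧ r ≠ 2 ∧ r ≠ 4) :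
    u ∈ arcComponent K x r ↔ ∃ q < n, (q ≠ 0 ∧ q ≠ 2 ∧ q ≠ 4) ∧ min q 5 = min r 5 ∧ x q = u := by
  rw [arcComponent, Finset.mem_filter, trim_verts, Finset.mem_inter]
  constructor
  · rintro ⟨-, hru⟩
    induction hru with
    | refl => exact ⟨r, hr, hr', rfl, rfl⟩
    | @tail y z _ hyz ih =>
      obtain ⟨q, hq, hq', hqr, rfl⟩ := ih
      obtain ⟨-, hzT, hadj⟩ := adj_trim_top.1 hyz
      obtain ⟨s, hs, hs', rfl⟩ := h.mem_verts_sdiff_cycleCore.1 hzT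
      refine ⟨s, hs, hs', ?_, rfl⟩
      have := h.eq_or_cycleAdj_of_adj hq hs hadj
      simp only [CycleAdj] at this
      omega
  · rintro ⟨q, hq, hq', hqr, rfl⟩
    have hxq : x q ∈ K.verts \ cycleCore x := h.mem_verts_sdiff_cycleCore.2 ⟨q, hq, hq', rfl⟩
    refine ⟨⟨Finset.mem_sdiff.1 hxq |>.1, hxq⟩, ?_⟩
    by_cases hr5 : r < 5
    · have hqr' : q = r := by omega
      exact hqr' ▸ .refl
    · exact (Std.Symm.symm _ _ (h.reflTransGen_five (by omega) hr)).trans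
        (h.reflTransGen_five (by omega) hq)

lemma isComponent_arcComponent (h : K.IsLongCycle x n) (hr : r < n)
    (hr' : r ≠ 0 ∧ r ≠ 2 ∧ r ≠ 4) :
    (K.trim (K.verts \ cycleCore x) ⊤).IsComponent (arcComponent K x r) := by
  have hxr := h.mem_verts_sdiff_cycleCore.2 ⟨r, hr, hr', rfl⟩
  exact isComponent_filter (Finset.mem_inter.2 ⟨(Finset.mem_sdiff.1 hxr).1, hxr⟩)

/-- `(p + 3) % 6` is the arc opposite to the core vertex `x p`. -/
lemma not_adj_opposite (h : K.IsLongCycle x n) (hp : p = 0 ∨ p = 2 ∨ p = 4) (hr : r < n)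
    (hr' : r ≠ 0 ∧ r ≠ 2 ∧ r ≠ 4) (hpr : (p + 3) % 6 = min r 5) :
    ∀ v ∈ cycleCore x ∪ arcComponent K x r, ¬ (cliqueCompletion K).Adj (x p) v := by
  have := h.six_le
  intro v hv hadj
  obtain ⟨q, hq, hqn⟩ : ∃ q < n, (q = 0 ∨ q = 2 ∨ q = 4 ∨ min q 5 = min r 5) ∧ x q = v := by
    rcases Finset.mem_union.1 hv with hv | hv
    · obtain ⟨q, hq, rfl⟩ := mem_cycleCore.1 hv
      exact ⟨q, by omega, by omega, rfl⟩
    · obtain ⟨q, hq, -, hqr, rfl⟩ := (h.mem_arcComponent hr hr').1 hv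
      exact ⟨q, hq, Or.inr (Or.inr (Or.inr hqr)), rfl⟩
  obtain ⟨hq', rfl⟩ := hqn
  have := (h.adj_iff p (by omega) q hq).1 hadj
  simp only [CycleAdj] at this
  omega

lemma ne (h : K.IsLongCycle x n) (hp : p < n) (hq : q < n) (hpq : p ≠ q) : x p ≠ x q :=
  mt (h.eq_iff hp hq).1 hpq

lemma opposite_lt_and_ne (h : K.IsLongCycle x n) (hp : p = 0 ∨ p = 2 ∨ p = 4) :
    (p + 3) % 6 < n ∧ ((p + 3) % 6 ≠ 0 ∧ (p + 3) % 6 ≠ 2 ∧ (p + 3) % 6 ≠ 4) := by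
  have := h.six_le
  omega

lemma card_cycleCore (h : K.IsLongCycle x n) : (cycleCore x).card = 3 := by
  have := h.six_le
  rw [cycleCore, Finset.card_insert_of_notMem,
    Finset.card_pair (h.ne (by omega) (by omega) (by omega))]
  simp only [Finset.mem_insert, Finset.mem_singleton, not_or]
  exact ⟨h.ne (by omega) (by omega) (by omega), h.ne (by omega) (by omega) (by omega)⟩

lemma cycleCore_subset (h : K.IsLongCycle x n) : cycleCore x ⊆ K.verts := fun v hv => by
  have := h.six_le
  obtain ⟨p, hp, rfl⟩ := mem_cycleCore.1 hv
  exact h.mem_verts.2 ⟨p, by omega, rfl⟩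

lemma eq_of_arcComponent_eq (h : K.IsLongCycle x n) (hp : p = 0 ∨ p = 2 ∨ p = 4)
    (hq : q = 0 ∨ q = 2 ∨ q = 4)
    (hpq : arcComponent K x ((p + 3) % 6) = arcComponent K x ((q + 3) % 6)) : p = q := by
  obtain ⟨hp₁, hp₂⟩ := h.opposite_lt_and_ne hp
  obtain ⟨hq₁, hq₂⟩ := h.opposite_lt_and_ne hq
  have hmem : x ((p + 3) % 6) ∈ arcComponent K x ((q + 3) % 6) :=
    hpq ▸ (h.mem_arcComponent hp₁ hp₂).2 ⟨_, hp₁, hp₂, rfl, rfl⟩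
  obtain ⟨s, hs, -, hsq, hsp⟩ := (h.mem_arcComponent hq₁ hq₂).1 hmem
  rw [h.eq_iff hs hp₁] at hsp
  omega

lemma not_subset_biUnion (h : K.IsLongCycle x n)
    (hD : (K.trim (K.verts \ cycleCore x) ⊤).IsComponent D) :
    ¬ cycleCore x ⊆ (obstructionEdges K (cycleCore x) D).biUnion id := by
  obtain ⟨v, hv, rfl⟩ := hD
  obtain ⟨r, hr, hr', rfl⟩ := h.mem_verts_sdiff_cycleCore.1 (Finset.mem_inter.1 hv).2
  intro hcover
  obtain ⟨e, he, hpe⟩ := Finset.mem_biUnion.1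
    (hcover (mem_cycleCore.2 ⟨(min r 5 + 3) % 6, by omega, rfl⟩))
  exact notMem_of_mem_obstructionEdges (h.not_adj_opposite (by omega) hr hr' (by omega)) he hpe

lemma erase_subset_biUnion (h : K.IsLongCycle x n) (hp : p = 0 ∨ p = 2 ∨ p = 4) :
    (cycleCore x).erase (x p) ⊆
      (obstructionEdges K (cycleCore x) (arcComponent K x ((p + 3) % 6))).biUnion id := by
  have := h.six_le
  obtain ⟨hr, hr'⟩ := h.opposite_lt_and_ne hp
  intro z hz
  obtain ⟨hzp, hz⟩ := Finset.mem_erase.1 hz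
  obtain ⟨q, hq, rfl⟩ := mem_cycleCore.1 hz
  rw [Ne, h.eq_iff (p := q) (q := p) (by omega) (by omega)] at hzp
  obtain ⟨s, hs, hs', hsr, hqs⟩ : ∃ s < n, (s ≠ 0 ∧ s ≠ 2 ∧ s ≠ 4) ∧
      min s 5 = min ((p + 3) % 6) 5 ∧ CycleAdj n q s := by
    -- the long arc meets `x 0` in `x (n - 1)`; the short arcs meet both their core neighbours
    refine ⟨if q = 0 ∧ p = 2 then n - 1 else (p + 3) % 6, ?_⟩
    unfold CycleAdj
    split_ifs <;> omega
  refine Finset.mem_biUnion.2 ⟨{x q, x s}, pair_mem_obstructionEdges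
    (h.pair_mem_edges (by omega) hs hqs) hz
    ((h.mem_arcComponent hr hr').2 ⟨s, hs, hs', hsr, rfl⟩) (h.ne (by omega) hs (by omega)),
    Finset.mem_insert_self _ _⟩

theorem isLObstruction (h : K.IsLongCycle x n) : IsLObstruction ⊤ K := by
  set Dmap : ℕ → Finset ℕ := fun v =>
    arcComponent K x ((Function.invFunOn x (Set.Iio n) v + 3) % 6)
  have hDmap : ∀ p, (p = 0 ∨ p = 2 ∨ p = 4) → Dmap (x p) = arcComponent K x ((p + 3) % 6) :=
    fun p hp => by
      have := h.six_le
      simp only [Dmap, h.injOn.leftInvOn_invFunOn (Set.mem_Iio.2 (by omega : p < n))]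
  refine ⟨3, le_rfl, cycleCore x, h.cycleCore_subset, h.card_cycleCore,
    trim_edges_card_le_one_iff.2 fun u hu v hv => ?_, fun D hD => h.not_subset_biUnion hD,
    Dmap, ?_, fun c hc => ?_⟩
  · obtain ⟨p, hp, rfl⟩ := mem_cycleCore.1 hu
    obtain ⟨hr, hr'⟩ := h.opposite_lt_and_ne hp
    exact h.not_adj_opposite hp hr hr' (by omega) v (Finset.mem_union_left _ hv)
  · rintro _ hu _ hv huv
    obtain ⟨p, hp, rfl⟩ := mem_cycleCore.1 hu
    obtain ⟨q, hq, rfl⟩ := mem_cycleCore.1 hv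
    rw [hDmap p hp, hDmap q hq] at huv
    rw [h.eq_of_arcComponent_eq hp hq huv]
  · obtain ⟨p, hp, rfl⟩ := mem_cycleCore.1 hc
    obtain ⟨hr, hr'⟩ := h.opposite_lt_and_ne hp
    rw [hDmap p hp]
    exact ⟨h.isComponent_arcComponent hr hr', h.erase_subset_biUnion hp, fun e he =>
      notMem_of_mem_obstructionEdges (h.not_adj_opposite hp hr hr' (by omega)) he⟩

end IsLongCycle

variable {x : ℕ → ℕ} {n : ℕ}

lemma image_subset_verts_of_cycle (hG : G.Good) (hn : 2 ≤ n)
    (hadj : ∀ p < n, ∀ q < n, ((cliqueCompletion G).Adj (x p) (x q) ↔ CycleAdj n p q)) :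
    (Finset.range n).image x ⊆ G.verts := by
  intro v hv
  obtain ⟨p, hp, rfl⟩ := Finset.mem_image.1 hv
  rw [Finset.mem_range] at hp
  refine hG.mem_verts_of_adj ((hadj (if p = 0 then 1 else p - 1) ?_ p hp).2 ?_).2
  · split_ifs <;> omega
  · unfold CycleAdj; split_ifs <;> omega

lemma isLongCycle_trim (hG : G.Good) (hn : 6 ≤ n) (hinj : Set.InjOn x (Set.Iio n))
    (hadj : ∀ p < n, ∀ q < n, ((cliqueCompletion G).Adj (x p) (x q) ↔ CycleAdj n p q)) :
    (G.trim ((Finset.range n).image x) ⊤).IsLongCycle x n where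
  good := hG.trim _ _
  six_le := hn
  injOn := hinj
  verts_eq := Finset.inter_eq_right.2 (image_subset_verts_of_cycle hG (by omega) hadj)
  adj_iff p hp q hq := by
    rw [cliqueCompletion_trim_top_adj (Finset.mem_image_of_mem x (Finset.mem_range.2 hp))
      (Finset.mem_image_of_mem x (Finset.mem_range.2 hq)), hadj p hp q hq]

end HGraph

open HGraph in
theorem IsLObstruction.exists_hasInducedCycle {K : HGraph} (hK : K.Good)
    (h : IsLObstruction ⊤ K) : ∃ n, 6 ≤ n ∧ HasInducedCycle (cliqueCompletion K) n := by
  obtain ⟨k, hk, C, -, hCk, hC, -, Dmap, hDinj, hDmap⟩ := h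
  have hCind := trim_edges_card_le_one_iff.1 hC
  have hDT : ∀ c ∈ C, Dmap c ⊆ K.verts \ C := fun c hc =>
    (hDmap c hc).1.subset_verts.trans Finset.inter_subset_right
  have hadjT : ∀ c ∈ C, ∀ x ∈ Dmap c, ∀ y ∈ Dmap c,
      (cliqueCompletion (K.trim (K.verts \ C) ⊤)).Adj x y ↔ (cliqueCompletion K).Adj x y :=
    fun c hc x hx y hy => cliqueCompletion_trim_top_adj (hDT c hc hx) (hDT c hc hy)
  set c : Fin 3 → ℕ := fun i => C.orderEmbOfFin hCk (Fin.castLE hk i)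
  have hcC : ∀ i, c i ∈ C := fun i => C.orderEmbOfFin_mem hCk _
  have hcinj : Function.Injective c :=
    (C.orderEmbOfFin hCk).injective.comp (Fin.castLE_injective hk)
  have hsep : ∀ i j, i ≠ j → ∀ u ∈ Dmap (c i), ∀ v ∈ Dmap (c j),
      u ≠ v ∧ ¬ (cliqueCompletion K).Adj u v := by
    intro i j hij u hu v hv
    have hne : Dmap (c i) ≠ Dmap (c j) := fun h => hcinj.ne hij (hDinj (hcC i) (hcC j) h)
    obtain ⟨huv, hnadj⟩ :=
      (hDmap _ (hcC i)).1.not_adj_of_ne (hK.trim _ _) (hDmap _ (hcC j)).1 hne hu hv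
    exact ⟨huv, fun h => hnadj ((cliqueCompletion_trim_top_adj (hDT _ (hcC i) hu)
      (hDT _ (hcC j) hv)).2 h)⟩
  exact SimpleGraph.exists_hasInducedCycle_of_three_sets c (fun i => ↑(Dmap (c i)))
    (fun i j hij => ⟨hcinj.ne hij, hCind _ (hcC i) _ (hcC j)⟩)
    (fun i j hi => (Finset.mem_sdiff.1 (hDT _ (hcC j) hi)).2 (hcC i)) hsep
    (fun i u hu => not_adj_of_forall_notMem hK (hDmap _ (hcC i)).1 (hDmap _ (hcC i)).2.2 hu)
    (fun i j hij => exists_adj_of_mem_biUnion hCind (hcC j)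
      ((hDmap _ (hcC i)).2.1 (Finset.mem_erase.2 ⟨hcinj.ne hij.symm, hcC j⟩)))
    (fun i u hu v hv => ReflTransGen.mono (fun x y hxy => ⟨hxy.1, hxy.2.1,
      (hadjT _ (hcC i) x hxy.1 y hxy.2.1).1 hxy.2.2⟩) _ _
      ((hDmap _ (hcC i)).1.reflTransGen (hK.trim _ _) hu hv))

theorem stmt11 (H : HGraph) (hH : H.Good) :
    ITSFree ⊤ H ↔ ¬ ∃ n, 6 ≤ n ∧ HasInducedCycle (cliqueCompletion H) n := by
  constructor
  · rintro hfree ⟨n, hn, hcyc⟩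
    have : NeZero n := ⟨by omega⟩
    obtain ⟨x, hinj, hadj⟩ := hasInducedCycle_iff.1 hcyc
    exact hfree _ (HGraph.image_subset_verts_of_cycle hH (by omega) hadj)
      (HGraph.isLongCycle_trim hH hn hinj hadj).isLObstruction
  · rintro hno S - hobs
    obtain ⟨n, hn, hcyc⟩ := hobs.exists_hasInducedCycle (hH.trim S ⊤)
    exact hno ⟨n, hn, hcyc.of_trim_top⟩

end
end
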